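/- arXiv:1504.05625 — 14 statements merged into one kernel-verified Lean document; each statement's English description precedes it below -/
import Mathlib

section
/- Let φ : N → ℝ be a potential extending the boundary potential ψ : ∂N → ℝ. Then φ obeys the principle of minimum power for ψ if and only if the current induced by φ obeys Kirchhoff's current law, i.e. for every nonterminal node n ∈ N∖∂N, ∑_{e : s(e)=n} I(e) = ∑_{e : t(e)=n} I(e). -/
open Finset

private lemma quad_coeff_zero {q c : ℝ} (hq : 0 ≤ q)
    (h : ∀ ε : ℝ, 0 ≤ q * ε ^ 2 + c * ε) : c = 0 := by
  by_contra hc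
  have hq1 : (0:ℝ) < q + 1 := by linarith
  have h1 := h (-c / (2 * (q + 1)))
  have key : q * (-c / (2 * (q + 1))) ^ 2 + c * (-c / (2 * (q + 1)))
      = -(c ^ 2 * (q + 2) / (4 * (q + 1) ^ 2)) := by
    field_simp
    ring
  rw [key] at h1
  have hpos : 0 < c ^ 2 * (q + 2) := by positivity
  have hd : (0:ℝ) < 4 * (q + 1) ^ 2 := by positivity
  have : 0 < c ^ 2 * (q + 2) / (4 * (q + 1) ^ 2) := div_pos hpos hd
  linarith

private lemma sum_fiber_mul {E N : Type*} [Fintype E] [Fintype N] [DecidableEq N]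
    (f : E → N) (I : E → ℝ) (δ : N → ℝ) :
    ∑ e, I e * δ (f e) =
      ∑ n, δ n * ∑ e ∈ univ.filter (fun e => f e = n), I e := by
  have h : ∀ n, ∑ e ∈ univ.filter (fun e => f e = n), I e * δ (f e)
      = δ n * ∑ e ∈ univ.filter (fun e => f e = n), I e := by
    intro n
    rw [Finset.mul_sum]
    refine Finset.sum_congr rfl fun e he => ?_
    rw [Finset.mem_filter] at he
    rw [he.2]
    ring
  calc ∑ e, I e * δ (f e)
      = ∑ n, ∑ e ∈ univ.filter (fun e => f e = n), I e * δ (f e) :=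
        (Finset.sum_fiberwise_of_maps_to (fun e _ => Finset.mem_univ (f e)) _).symm
    _ = _ := Finset.sum_congr rfl fun n _ => h n

/-- For a circuit of linear resistors, a potential `φ` extending the
boundary potential `ψ` obeys the principle of minimum power for `ψ` if and only if the
induced current obeys Kirchhoff's current law at every nonterminal node. -/
theorem statement0 {E N : Type*} [Fintype E] [Fintype N] [DecidableEq N]
    (s t : E → N) (r : E → ℝ) (hr : ∀ e, 0 < r e)
    (B : Finset N) (ψ : B → ℝ) (φ : N → ℝ)
    (hext : ∀ n : B, φ n = ψ n) :
    (∀ φ' : N → ℝ, (∀ n : B, φ' n = ψ n) →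
        (1 / 2) * ∑ e, (1 / r e) * (φ (t e) - φ (s e)) ^ 2 ≤
          (1 / 2) * ∑ e, (1 / r e) * (φ' (t e) - φ' (s e)) ^ 2) ↔
      (∀ n ∉ B,
        ∑ e ∈ univ.filter (fun e => s e = n), (1 / r e) * (φ (t e) - φ (s e)) =
          ∑ e ∈ univ.filter (fun e => t e = n), (1 / r e) * (φ (t e) - φ (s e))) := by
  set I : E → ℝ := fun e => (1 / r e) * (φ (t e) - φ (s e)) with hI
  -- key expansion
  have key : ∀ δ : N → ℝ,
      (1 / 2) * ∑ e, (1 / r e) * ((φ (t e) + δ (t e)) - (φ (s e) + δ (s e))) ^ 2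
        = (1 / 2) * ∑ e, (1 / r e) * (φ (t e) - φ (s e)) ^ 2
          + ∑ n, δ n * ((∑ e ∈ univ.filter (fun e => t e = n), I e)
              - ∑ e ∈ univ.filter (fun e => s e = n), I e)
          + (1 / 2) * ∑ e, (1 / r e) * (δ (t e) - δ (s e)) ^ 2 := by
    intro δ
    have hsplit : ∑ e, (1 / r e) * ((φ (t e) + δ (t e)) - (φ (s e) + δ (s e))) ^ 2
        = ∑ e, ((1 / r e) * (φ (t e) - φ (s e)) ^ 2
            + (2 * (I e * δ (t e)) - 2 * (I e * δ (s e)))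
            + (1 / r e) * (δ (t e) - δ (s e)) ^ 2) := by
      refine Finset.sum_congr rfl fun e _ => ?_
      simp only [hI]
      ring
    rw [hsplit, Finset.sum_add_distrib, Finset.sum_add_distrib, Finset.sum_sub_distrib]
    have h1 : ∑ e, 2 * (I e * δ (t e)) = 2 * ∑ e, I e * δ (t e) := by
      rw [Finset.mul_sum]
    have h2 : ∑ e, 2 * (I e * δ (s e)) = 2 * ∑ e, I e * δ (s e) := by
      rw [Finset.mul_sum]
    rw [h1, h2, sum_fiber_mul t I δ, sum_fiber_mul s I δ]
    have h3 : ∑ n, δ n * ((∑ e ∈ univ.filter (fun e => t e = n), I e)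
        - ∑ e ∈ univ.filter (fun e => s e = n), I e)
        = (∑ n, δ n * ∑ e ∈ univ.filter (fun e => t e = n), I e)
          - ∑ n, δ n * ∑ e ∈ univ.filter (fun e => s e = n), I e := by
      rw [← Finset.sum_sub_distrib]
      exact Finset.sum_congr rfl fun n _ => mul_sub _ _ _
    rw [h3]
    ring
  constructor
  · intro hmin n hn
    set cn : ℝ := (∑ e ∈ univ.filter (fun e => t e = n), I e)
        - ∑ e ∈ univ.filter (fun e => s e = n), I e with hcn
    set q0 : ℝ := (1 / 2) * ∑ e, (1 / r e) *
        ((if t e = n then (1:ℝ) else 0) - (if s e = n then (1:ℝ) else 0)) ^ 2 with hq0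
    have hq0nn : 0 ≤ q0 := by
      rw [hq0]
      have h : ∀ e : E, 0 ≤ (1 / r e) *
          ((if t e = n then (1:ℝ) else 0) - (if s e = n then (1:ℝ) else 0)) ^ 2 := by
        intro e
        have := (hr e).le
        positivity
      have := Finset.sum_nonneg (fun e (_ : e ∈ univ) => h e)
      linarith
    have hkey : ∀ ε : ℝ, 0 ≤ q0 * ε ^ 2 + cn * ε := by
      intro ε
      set δ : N → ℝ := fun m => if m = n then ε else 0 with hδ
      have hext' : ∀ m : B, (fun m => φ m + δ m) m = ψ m := by
        intro m
        have hmn : (m : N) ≠ n := by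
          intro h
          exact hn (h ▸ m.2)
        simp [hδ, hmn, hext m]
      have hle := hmin (fun m => φ m + δ m) hext'
      rw [key δ] at hle
      have hlin : ∑ m, δ m * ((∑ e ∈ univ.filter (fun e => t e = m), I e)
          - ∑ e ∈ univ.filter (fun e => s e = m), I e) = cn * ε := by
        rw [hcn]
        rw [Finset.sum_eq_single n]
        · simp only [hδ, if_pos rfl]
          ring
        · intro m _ hm
          simp [hδ, hm]
        · intro h
          exact absurd (Finset.mem_univ n) h
      have hquad : (1 / 2) * ∑ e, (1 / r e) * (δ (t e) - δ (s e)) ^ 2 = q0 * ε ^ 2 := by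
        have he : ∀ e : E, (1 / r e) * (δ (t e) - δ (s e)) ^ 2
            = ((1 / r e) * ((if t e = n then (1:ℝ) else 0)
                - (if s e = n then (1:ℝ) else 0)) ^ 2) * ε ^ 2 := by
          intro e
          simp only [hδ]
          by_cases h1 : t e = n <;> by_cases h2 : s e = n <;> simp [h1, h2] <;> ring
        rw [Finset.sum_congr rfl fun e _ => he e, ← Finset.sum_mul, hq0]
        ring
      rw [hlin, hquad] at hle
      clear_value cn q0
      linarith
    have hz := quad_coeff_zero hq0nn hkey
    rw [hcn] at hz
    simp only [hI] at hz ⊢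
    linarith
  · intro hkcl φ' hφ'
    set δ : N → ℝ := fun m => φ' m - φ m with hδ
    have hφ'eq : φ' = fun m => φ m + δ m := by
      funext m; simp [hδ]
    rw [hφ'eq]
    rw [key δ]
    have hlin : ∑ m, δ m * ((∑ e ∈ univ.filter (fun e => t e = m), I e)
        - ∑ e ∈ univ.filter (fun e => s e = m), I e) = 0 := by
      refine Finset.sum_eq_zero fun m _ => ?_
      by_cases hm : m ∈ B
      · have hz : δ m = 0 := by
          simp [hδ, hφ' ⟨m, hm⟩, hext ⟨m, hm⟩]
        rw [hz, zero_mul]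
      · have hk := hkcl m hm
        simp only [hI]
        rw [hk]
        ring
    rw [hlin]
    have hquad : 0 ≤ (1 / 2) * ∑ e, (1 / r e) * (δ (t e) - δ (s e)) ^ 2 := by
      have h : ∀ e : E, 0 ≤ (1 / r e) * (δ (t e) - δ (s e)) ^ 2 := by
        intro e
        have := (hr e).le
        positivity
      have := Finset.sum_nonneg (fun e (_ : e ∈ univ) => h e)
      linarith
    linarith
end

section
/- For any boundary potential ψ : ∂N → ℝ there exists a potential φ : N → ℝ obeying the principle of minimum power for ψ. Moreover, there exists exactly one potential φ that obeys the principle of minimum power for ψ and satisfies φ(n) = 0 for every node n whose connected component does not touch the boundary. -/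
open Finset

/-- The extended power functional of a circuit of linear resistors. -/
noncomputable def extPower {E N : Type*} [Fintype E] (s t : E → N) (r : E → ℝ)
    (φ : N → ℝ) : ℝ :=
  (1 / 2) * ∑ e, (1 / r e) * (φ (t e) - φ (s e)) ^ 2

/-- `φ` obeys the principle of minimum power for the boundary potential `ψ`:
it extends `ψ` and minimizes the extended power functional among extensions of `ψ`. -/
def MinimizesPower {E N : Type*} [Fintype E] (s t : E → N) (r : E → ℝ)
    (B : Finset N) (ψ : B → ℝ) (φ : N → ℝ) : Prop :=
  (∀ n : B, φ n = ψ n) ∧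
    ∀ φ' : N → ℝ, (∀ n : B, φ' n = ψ n) → extPower s t r φ ≤ extPower s t r φ'

/-- Two nodes lie in the same connected component of the circuit. -/
def SameComponent {E N : Type*} (s t : E → N) : N → N → Prop :=
  Relation.EqvGen fun a b => ∃ e, s e = a ∧ t e = b

/-- The connected component of the node `n` touches the boundary `B`. -/
def Touches {E N : Type*} (s t : E → N) (B : Finset N) (n : N) : Prop :=
  ∃ m ∈ B, SameComponent s t n m

private lemma clamp_sq_le (C a b : ℝ) :
    (max (-C) (min C a) - max (-C) (min C b)) ^ 2 ≤ (a - b) ^ 2 := by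
  have h1 : |min C a - min C b| ≤ |a - b| := by
    have := abs_min_sub_min_le_max C a C b
    simpa using this
  have h2 : |max (min C a) (-C) - max (min C b) (-C)| ≤ |min C a - min C b| :=
    abs_max_sub_max_le_abs _ _ _
  rw [max_comm (-C) (min C a), max_comm (-C) (min C b)]
  have := (h2.trans h1)
  calc _ = |max (min C a) (-C) - max (min C b) (-C)| ^ 2 := (sq_abs _).symm
    _ ≤ |a - b| ^ 2 := by apply pow_le_pow_left₀ (abs_nonneg _) this
    _ = (a - b) ^ 2 := sq_abs _

private lemma sameComponent_const {E N : Type*} (s t : E → N) (d : N → ℝ)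
    (h : ∀ e, d (s e) = d (t e)) {a b : N} (hab : SameComponent s t a b) :
    d a = d b := by
  induction hab with
  | rel x y hxy => obtain ⟨e, h1, h2⟩ := hxy; rw [← h1, ← h2]; exact h e
  | refl => rfl
  | symm _ _ _ ih => exact ih.symm
  | trans _ _ _ _ _ ih1 ih2 => exact ih1.trans ih2

private lemma touches_edge {E N : Type*} (s t : E → N) (B : Finset N) (e : E) :
    Touches s t B (s e) ↔ Touches s t B (t e) := by
  have hst : SameComponent s t (s e) (t e) := Relation.EqvGen.rel _ _ ⟨e, rfl, rfl⟩
  constructor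
  · rintro ⟨m, hm, hc⟩; exact ⟨m, hm, Relation.EqvGen.trans _ _ _ (Relation.EqvGen.symm _ _ hst) hc⟩
  · rintro ⟨m, hm, hc⟩; exact ⟨m, hm, Relation.EqvGen.trans _ _ _ hst hc⟩

/-- For any boundary potential `ψ` there exists a potential obeying the
principle of minimum power for `ψ`; moreover there is exactly one such potential that
vanishes on every connected component not touching the boundary. -/
theorem statement1 {E N : Type*} [Fintype E] [Fintype N] [DecidableEq N]
    (s t : E → N) (r : E → ℝ) (hr : ∀ e, 0 < r e) (B : Finset N) (ψ : B → ℝ) :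
    (∃ φ : N → ℝ, MinimizesPower s t r B ψ φ) ∧
      (∃! φ : N → ℝ, MinimizesPower s t r B ψ φ ∧
        ∀ n, ¬ Touches s t B n → φ n = 0) := by
  classical
  -- bound on boundary values
  set C : ℝ := ∑ b : B, |ψ b| with hC
  have hC0 : 0 ≤ C := Finset.sum_nonneg fun b _ => abs_nonneg _
  have hψC : ∀ b : B, |ψ b| ≤ C := fun b =>
    Finset.single_le_sum (fun b _ => abs_nonneg (ψ b)) (Finset.mem_univ b)
  -- the clamp
  set c : ℝ → ℝ := fun x => max (-C) (min C x) with hc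
  have hc_mem : ∀ x, c x ∈ Set.Icc (-C) C := by
    intro x
    refine ⟨le_max_left _ _, max_le (by linarith) (min_le_left _ _)⟩
  have hc_fix : ∀ x, -C ≤ x → x ≤ C → c x = x := by
    intro x h1 h2
    simp only [hc, min_eq_right h2, max_eq_right h1]
  -- the compact constraint set
  set S : Set (N → ℝ) :=
    {φ | (∀ n, φ n ∈ Set.Icc (-C) C) ∧ ∀ b : B, φ b = ψ b} with hS
  have hS_compact : IsCompact S := by
    have h1 : IsCompact (Set.pi Set.univ fun _ : N => Set.Icc (-C) C) :=
      isCompact_univ_pi fun _ => isCompact_Icc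
    have h2 : S = (Set.pi Set.univ fun _ : N => Set.Icc (-C) C) ∩
        {φ | ∀ b : B, φ b = ψ b} := by
      ext φ
      simp only [hS, Set.mem_setOf_eq, Set.mem_inter_iff, Set.mem_univ_pi]
    rw [h2]
    refine h1.inter_right ?_
    have : ({φ : N → ℝ | ∀ b : B, φ b = ψ b}) = ⋂ b : B, {φ : N → ℝ | φ b = ψ b} := by
      ext φ; simp
    rw [this]
    exact isClosed_iInter fun b => isClosed_eq (continuous_apply _) continuous_const
  have hS_ne : S.Nonempty := by
    refine ⟨fun n => if h : n ∈ B then ψ ⟨n, h⟩ else 0, ?_, ?_⟩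
    · intro n
      by_cases h : n ∈ B
      · simp only [h, dif_pos]
        exact ⟨neg_le_of_abs_le (hψC ⟨n, h⟩), le_of_abs_le (hψC ⟨n, h⟩)⟩
      · simp only [h, dif_neg, not_false_iff]
        exact ⟨by linarith, hC0⟩
    · intro b; simp [b.2]
  have hcont : Continuous (extPower s t r) := by
    unfold extPower
    fun_prop
  obtain ⟨φ, hφS, hφmin⟩ := hS_compact.exists_isMinOn hS_ne (hcont.continuousOn)
  -- clamping does not increase power
  have hclamp : ∀ φ' : N → ℝ, extPower s t r (c ∘ φ') ≤ extPower s t r φ' := by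
    intro φ'
    unfold extPower
    have h2 : (0:ℝ) ≤ 1/2 := by norm_num
    refine mul_le_mul_of_nonneg_left (Finset.sum_le_sum fun e _ => ?_) h2
    refine mul_le_mul_of_nonneg_left (clamp_sq_le _ _ _) ?_
    have := hr e; positivity
  have hmin : MinimizesPower s t r B ψ φ := by
    refine ⟨hφS.2, fun φ' hφ' => ?_⟩
    have hmem : c ∘ φ' ∈ S := by
      refine ⟨fun n => hc_mem _, fun b => ?_⟩
      have : φ' b = ψ b := hφ' b
      simp only [Function.comp_apply, this]
      exact hc_fix _ (neg_le_of_abs_le (hψC b)) (le_of_abs_le (hψC b))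
    exact (hφmin hmem).trans (hclamp φ')
  -- boundary nodes touch
  have hBt : ∀ n, n ∈ B → Touches s t B n := fun n hn =>
    ⟨n, hn, Relation.EqvGen.refl n⟩
  -- zero out the non-touching components of φ
  set φ0 : N → ℝ := fun n => if Touches s t B n then φ n else 0 with hφ0
  have hφ0B : ∀ b : B, φ0 b = ψ b := by
    intro b
    simp only [hφ0, if_pos (hBt b b.2)]
    exact hmin.1 b
  have hφ0le : extPower s t r φ0 ≤ extPower s t r φ := by
    unfold extPower
    refine mul_le_mul_of_nonneg_left (Finset.sum_le_sum fun e _ => ?_) (by norm_num)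
    by_cases h : Touches s t B (s e)
    · have h' : Touches s t B (t e) := (touches_edge s t B e).mp h
      simp only [hφ0, if_pos h, if_pos h']
      exact le_rfl
    · have h' : ¬ Touches s t B (t e) := fun hh => h ((touches_edge s t B e).mpr hh)
      simp only [hφ0, if_neg h, if_neg h']
      have : (0:ℝ) ≤ 1 / r e * (φ (t e) - φ (s e)) ^ 2 := by
        have := hr e; positivity
      simpa using this
  have hmin0 : MinimizesPower s t r B ψ φ0 :=
    ⟨hφ0B, fun φ' hφ' => hφ0le.trans (hmin.2 φ' hφ')⟩
  refine ⟨⟨φ, hmin⟩, φ0, ⟨hmin0, fun n hn => by simp [hφ0, if_neg hn]⟩, ?_⟩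
  -- uniqueness
  rintro φ1 ⟨hmin1, hz1⟩
  -- both minimize, so equal power; also φ0 minimizes
  have heq : extPower s t r φ1 = extPower s t r φ0 :=
    le_antisymm (hmin1.2 φ0 hφ0B) (hmin0.2 φ1 hmin1.1)
  set μ : N → ℝ := fun n => (φ1 n + φ0 n) / 2 with hμ
  have hμB : ∀ b : B, μ b = ψ b := by
    intro b
    simp only [hμ, hmin1.1 b, hφ0B b]
    ring
  have hkey : ∀ e, φ1 (t e) - φ1 (s e) = φ0 (t e) - φ0 (s e) := by
    -- parallelogram identity trick
    have hle : extPower s t r φ1 ≤ extPower s t r μ := hmin1.2 μ hμB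
    have hident : ∑ e, (1 / r e) * (μ (t e) - μ (s e)) ^ 2
        = (∑ e, (1 / r e) * (φ1 (t e) - φ1 (s e)) ^ 2
            + ∑ e, (1 / r e) * (φ0 (t e) - φ0 (s e)) ^ 2) / 2
          - ∑ e, (1 / r e) * ((φ1 (t e) - φ1 (s e) - (φ0 (t e) - φ0 (s e))) / 2) ^ 2 := by
      rw [← Finset.sum_add_distrib, Finset.sum_div, ← Finset.sum_sub_distrib]
      exact Finset.sum_congr rfl fun e _ => by simp only [hμ]; ring
    unfold extPower at hle heq
    have hsum : ∑ e, (1 / r e) *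
        ((φ1 (t e) - φ1 (s e) - (φ0 (t e) - φ0 (s e))) / 2) ^ 2 ≤ 0 := by
      nlinarith [hle, heq, hident]
    have hsum0 : ∑ e, (1 / r e) *
        ((φ1 (t e) - φ1 (s e) - (φ0 (t e) - φ0 (s e))) / 2) ^ 2 = 0 := by
      refine le_antisymm hsum (Finset.sum_nonneg fun e _ => by have := hr e; positivity)
    intro e
    have := (Finset.sum_eq_zero_iff_of_nonneg (fun e _ => by have := hr e; positivity)).mp hsum0
      e (Finset.mem_univ e)
    have hre : 1 / r e ≠ 0 := by have := hr e; positivity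
    have h2 : ((φ1 (t e) - φ1 (s e) - (φ0 (t e) - φ0 (s e))) / 2) ^ 2 = 0 := by
      rcases mul_eq_zero.mp this with h | h
      · exact absurd h hre
      · exact h
    have := pow_eq_zero_iff (n := 2) (by norm_num) |>.mp h2
    linarith [this]
  -- d := φ1 - φ0 is constant on edges
  set d : N → ℝ := fun n => φ1 n - φ0 n with hd
  have hde : ∀ e, d (s e) = d (t e) := by
    intro e
    have := hkey e
    simp only [hd]
    linarith
  funext n
  by_cases h : Touches s t B n
  · obtain ⟨m, hm, hc'⟩ := h
    have : d n = d m := sameComponent_const s t d hde hc'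
    have hdm : d m = 0 := by
      simp only [hd]
      rw [show φ1 m = ψ ⟨m, hm⟩ from hmin1.1 ⟨m, hm⟩,
        show φ0 m = ψ ⟨m, hm⟩ from hφ0B ⟨m, hm⟩]
      ring
    have : d n = 0 := this.trans hdm
    simp only [hd] at this
    linarith
  · rw [hz1 n h]
    simp [hφ0, if_neg h]
end

section
/- Suppose the potential φ : N → ℝ obeys the principle of minimum power for the boundary potential ψ : ∂N → ℝ. Then a potential φ' : N → ℝ obeys the principle of minimum power for ψ if and only if the difference φ' − φ is constant on every connected component of the circuit and vanishes on every connected component touching the boundary. -/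
open Finset

/-- If `φ` obeys the principle of minimum power for `ψ`, then `φ'` obeys
the principle of minimum power for `ψ` if and only if the difference `φ' - φ` is constant
on every connected component of the circuit and vanishes on every connected component
touching the boundary. -/
theorem statement2 {E N : Type*} [Fintype E] [Fintype N] [DecidableEq N]
    (s t : E → N) (r : E → ℝ) (hr : ∀ e, 0 < r e) (B : Finset N) (ψ : B → ℝ)
    (φ : N → ℝ) (hφ : MinimizesPower s t r B ψ φ) (φ' : N → ℝ) :
    MinimizesPower s t r B ψ φ' ↔
      ((∀ a b : N, SameComponent s t a b → φ' a - φ a = φ' b - φ b) ∧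
        ∀ n, Touches s t B n → φ' n - φ n = 0) := by
  obtain ⟨hext, hmin⟩ := hφ
  constructor
  · rintro ⟨hext', hmin'⟩
    have hle : extPower s t r φ ≤ extPower s t r φ' := hmin φ' hext'
    have hge : extPower s t r φ' ≤ extPower s t r φ := hmin' φ hext
    have heq : extPower s t r φ' = extPower s t r φ := le_antisymm hge hle
    set m : N → ℝ := fun n => (φ n + φ' n) / 2 with hm
    have hmext : ∀ n : B, m n = ψ n := fun n => by
      simp only [hm]; rw [hext n, hext' n]; ring
    have hPm : extPower s t r φ ≤ extPower s t r m := hmin m hmext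
    have expand : extPower s t r m =
        (extPower s t r φ + extPower s t r φ') / 2
          - (1/8) * ∑ e, (1 / r e) *
            ((φ' (t e) - φ' (s e)) - (φ (t e) - φ (s e))) ^ 2 := by
      unfold extPower
      rw [Finset.mul_sum, Finset.mul_sum, Finset.mul_sum, ← Finset.sum_add_distrib,
        Finset.sum_div, Finset.mul_sum, ← Finset.sum_sub_distrib]
      refine Finset.sum_congr rfl fun e _ => ?_
      simp only [hm]
      ring
    have hsum0 : ∑ e, (1 / r e) *
        ((φ' (t e) - φ' (s e)) - (φ (t e) - φ (s e))) ^ 2 = 0 := by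
      have hle0 : ∑ e, (1 / r e) *
          ((φ' (t e) - φ' (s e)) - (φ (t e) - φ (s e))) ^ 2 ≤ 0 := by
        rw [expand, heq] at hPm; linarith
      have hge0 : (0:ℝ) ≤ ∑ e, (1 / r e) *
          ((φ' (t e) - φ' (s e)) - (φ (t e) - φ (s e))) ^ 2 :=
        Finset.sum_nonneg fun e _ =>
          mul_nonneg (le_of_lt (one_div_pos.mpr (hr e))) (sq_nonneg _)
      linarith
    have key : ∀ e, φ' (t e) - φ' (s e) = φ (t e) - φ (s e) := by
      intro e
      have := (Finset.sum_eq_zero_iff_of_nonneg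
        (fun e _ => mul_nonneg (le_of_lt (one_div_pos.mpr (hr e)))
          (sq_nonneg _))).mp hsum0 e (Finset.mem_univ e)
      have hre : (0:ℝ) < 1 / r e := one_div_pos.mpr (hr e)
      have h2 : ((φ' (t e) - φ' (s e)) - (φ (t e) - φ (s e))) ^ 2 = 0 := by
        rcases mul_eq_zero.mp this with h | h
        · exact absurd h (ne_of_gt hre)
        · exact h
      have := pow_eq_zero_iff (n := 2) (by norm_num) |>.mp h2
      linarith
    have hconst : ∀ a b : N, SameComponent s t a b → φ' a - φ a = φ' b - φ b := by
      intro a b h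
      induction h with
      | rel a b hab =>
          obtain ⟨e, he1, he2⟩ := hab
          have := key e
          rw [he1, he2] at this
          linarith
      | refl a => rfl
      | symm a b _ ih => exact ih.symm
      | trans a b c _ _ ih1 ih2 => exact ih1.trans ih2
    refine ⟨hconst, ?_⟩
    rintro n ⟨m', hm'B, hcomp⟩
    have h1 : φ' n - φ n = φ' m' - φ m' := hconst n m' hcomp
    have h2 : φ' m' = ψ ⟨m', hm'B⟩ := hext' ⟨m', hm'B⟩
    have h3 : φ m' = ψ ⟨m', hm'B⟩ := hext ⟨m', hm'B⟩
    rw [h1, h2, h3, sub_self]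
  · rintro ⟨hconst, hzero⟩
    have hext' : ∀ n : B, φ' n = ψ n := by
      intro n
      have : φ' (n : N) - φ (n : N) = 0 :=
        hzero n ⟨n, n.2, Relation.EqvGen.refl _⟩
      have := hext n
      linarith [hzero (n : N) ⟨n, n.2, Relation.EqvGen.refl _⟩]
    have hPeq : extPower s t r φ' = extPower s t r φ := by
      unfold extPower
      congr 1
      refine Finset.sum_congr rfl fun e _ => ?_
      have h := hconst (s e) (t e) (Relation.EqvGen.rel _ _ ⟨e, rfl, rfl⟩)
      have : φ' (t e) - φ' (s e) = φ (t e) - φ (s e) := by linarith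
      rw [this]
    exact ⟨hext', fun φ'' hφ'' => hPeq ▸ hmin φ'' hφ''⟩
end

section
/- Let ψ, ψ' : ∂N → ℝ be boundary potentials and λ ∈ ℝ. Suppose φ obeys the principle of minimum power for ψ and vanishes on every connected component not touching the boundary, and φ' obeys the principle of minimum power for ψ' and vanishes on every connected component not touching the boundary. Then φ + λ·φ' obeys the principle of minimum power for ψ + λ·ψ' and vanishes on every connected component not touching the boundary. Hence the map sending ψ to the unique such minimizer is linear. -/
open Finset

noncomputable def linPart {E N : Type*} [Fintype E] (s t : E → N) (r : E → ℝ)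
    (φ η : N → ℝ) : ℝ :=
  ∑ e, (1 / r e) * (φ (t e) - φ (s e)) * (η (t e) - η (s e))

lemma extPower_expand {E N : Type*} [Fintype E] (s t : E → N) (r : E → ℝ)
    (φ η : N → ℝ) (c : ℝ) :
    extPower s t r (φ + c • η)
      = extPower s t r φ + c * linPart s t r φ η + c ^ 2 * extPower s t r η := by
  simp only [extPower, linPart, Pi.add_apply, Pi.smul_apply, smul_eq_mul, Finset.mul_sum,
    ← Finset.sum_add_distrib]
  apply Finset.sum_congr rfl
  intro e _
  ring

lemma extPower_nonneg {E N : Type*} [Fintype E] (s t : E → N) (r : E → ℝ)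
    (hr : ∀ e, 0 < r e) (φ : N → ℝ) : 0 ≤ extPower s t r φ := by
  apply mul_nonneg (by norm_num)
  apply Finset.sum_nonneg
  intro e _
  exact mul_nonneg (one_div_nonneg.mpr (hr e).le) (sq_nonneg _)

lemma zero_of_forall (a b : ℝ) (hb : 0 ≤ b) (h : ∀ c : ℝ, 0 ≤ c * a + c ^ 2 * b) :
    a = 0 := by
  by_contra ha
  have hb1 : (0:ℝ) < b + 1 := by linarith
  have h1 := h (-a / (b + 1))
  have heq : (-a / (b + 1)) * a + (-a / (b + 1)) ^ 2 * b = -(a ^ 2) / (b + 1) ^ 2 := by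
    field_simp
    ring
  rw [heq] at h1
  have h2 : 0 < a ^ 2 := lt_of_le_of_ne (sq_nonneg a) (Ne.symm (pow_ne_zero 2 ha))
  have h3 : 0 < (b + 1) ^ 2 := by positivity
  rw [le_div_iff₀ h3] at h1
  nlinarith

lemma crit_of_min {E N : Type*} [Fintype E] (s t : E → N) (r : E → ℝ)
    (hr : ∀ e, 0 < r e) (B : Finset N) (ψ : B → ℝ) (φ : N → ℝ)
    (h : MinimizesPower s t r B ψ φ) :
    ∀ η : N → ℝ, (∀ n : B, η n = 0) → linPart s t r φ η = 0 := by
  intro η hη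
  apply zero_of_forall _ _ (extPower_nonneg s t r hr η)
  intro c
  have h1 := h.2 (φ + c • η) (fun n => by
    simp [hη n, h.1 n])
  rw [extPower_expand] at h1
  linarith

lemma min_of_crit {E N : Type*} [Fintype E] (s t : E → N) (r : E → ℝ)
    (hr : ∀ e, 0 < r e) (B : Finset N) (ψ : B → ℝ) (φ : N → ℝ)
    (hext : ∀ n : B, φ n = ψ n)
    (hcrit : ∀ η : N → ℝ, (∀ n : B, η n = 0) → linPart s t r φ η = 0) :
    MinimizesPower s t r B ψ φ := by
  refine ⟨hext, fun φ'' hφ'' => ?_⟩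
  have hη : ∀ n : B, (φ'' - φ) n = 0 := fun n => by
    simp [hφ'' n, hext n]
  have key : φ'' = φ + (1:ℝ) • (φ'' - φ) := by ext n; simp
  rw [key, extPower_expand, hcrit _ hη]
  have := extPower_nonneg s t r hr (φ'' - φ)
  nlinarith

lemma linPart_add_smul {E N : Type*} [Fintype E] (s t : E → N) (r : E → ℝ)
    (φ φ' η : N → ℝ) (c : ℝ) :
    linPart s t r (φ + c • φ') η = linPart s t r φ η + c * linPart s t r φ' η := by
  simp only [linPart, Pi.add_apply, Pi.smul_apply, smul_eq_mul, Finset.mul_sum,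
    ← Finset.sum_add_distrib]
  apply Finset.sum_congr rfl
  intro e _
  ring

/-- Minimizers (vanishing on components not touching the boundary)
depend linearly on the boundary potential: if `φ` is such a minimizer for `ψ` and `φ'`
for `ψ'`, then `φ + λ·φ'` is such a minimizer for `ψ + λ·ψ'`. -/
theorem statement3 {E N : Type*} [Fintype E] [Fintype N] [DecidableEq N]
    (s t : E → N) (r : E → ℝ) (hr : ∀ e, 0 < r e) (B : Finset N)
    (ψ ψ' : B → ℝ) (lam : ℝ) (φ φ' : N → ℝ)
    (hφ : MinimizesPower s t r B ψ φ)
    (hφ0 : ∀ n, ¬ Touches s t B n → φ n = 0)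
    (hφ' : MinimizesPower s t r B ψ' φ')
    (hφ'0 : ∀ n, ¬ Touches s t B n → φ' n = 0) :
    MinimizesPower s t r B (ψ + lam • ψ') (φ + lam • φ') ∧
      ∀ n, ¬ Touches s t B n → (φ + lam • φ') n = 0 := by
  have hmin := min_of_crit s t r hr B (ψ + lam • ψ') (φ + lam • φ')
    (fun n => by simp [hφ.1 n, hφ'.1 n])
    (fun η hη => by
      rw [linPart_add_smul, crit_of_min s t r hr B ψ φ hφ η hη,
        crit_of_min s t r hr B ψ' φ' hφ' η hη]
      ring)
  exact ⟨hmin, fun n hn => by simp [hφ0 n hn, hφ'0 n hn]⟩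
end

section
/- Let S be a finite set and Q a quadratic form on S → ℝ. The following are equivalent: (i) Q is a Dirichlet form on S; (ii) Q(φ) ≤ Q(ψ) whenever |φ(i) − φ(j)| ≤ |ψ(i) − ψ(j)| for all i, j ∈ S; (iii) Q(φ) = 0 whenever φ is a constant function, and Q obeys the Markov property: Q(φ) ≤ Q(ψ) whenever φ(i) = min(ψ(i), 1) for all i ∈ S. -/
open Finset

/-- A Dirichlet form on a finite set `S`: a function of the shape
`ψ ↦ ∑_{i,j} c i j * (ψ i - ψ j)^2` with nonnegative coefficients. -/
def IsDirichletForm {S : Type*} [Fintype S] (Q : (S → ℝ) → ℝ) : Prop :=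
  ∃ c : S → S → ℝ, (∀ i j, 0 ≤ c i j) ∧
    ∀ ψ : S → ℝ, Q ψ = ∑ i, ∑ j, c i j * (ψ i - ψ j) ^ 2

private lemma aux_t_small {X Y : ℝ} (h : ∀ t : ℝ, 0 < t → 0 ≤ t ^ 2 * X + t * Y) : 0 ≤ Y := by
  by_contra hY
  push_neg at hY
  rcases le_or_gt X 0 with hX | hX
  · have := h 1 one_pos; nlinarith
  · have ht : (0 : ℝ) < -Y / (2 * X) := div_pos (by linarith) (by linarith)
    have := h (-Y / (2 * X)) ht
    have h2 : (-Y / (2 * X)) * (2 * X) = -Y := div_mul_cancel₀ _ (ne_of_gt (by linarith))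
    nlinarith

private lemma aux_s_large {Z a : ℝ} (h : ∀ s : ℝ, 0 < s → 0 ≤ Z - s * a) : a ≤ 0 := by
  by_contra ha
  push_neg at ha
  have hs : (0 : ℝ) < (|Z| + 1) / a := by positivity
  have := h _ hs
  have h2 : (|Z| + 1) / a * a = |Z| + 1 := div_mul_cancel₀ _ (ne_of_gt ha)
  nlinarith [le_abs_self Z, abs_nonneg Z]

private lemma min_one_lipschitz (a b : ℝ) : |min a 1 - min b 1| ≤ |a - b| := by
  rcases le_total a 1 with h | h <;> rcases le_total b 1 with h' | h'
  · rw [min_eq_left h, min_eq_left h']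
  · rw [min_eq_left h, min_eq_right h',
      abs_of_nonpos (by linarith : a - 1 ≤ 0), abs_of_nonpos (by linarith : a - b ≤ 0)]
    linarith
  · rw [min_eq_right h, min_eq_left h',
      abs_of_nonneg (by linarith : (0:ℝ) ≤ 1 - b), abs_of_nonneg (by linarith : (0:ℝ) ≤ a - b)]
    linarith
  · rw [min_eq_right h, min_eq_right h']
    simp [abs_nonneg]

/-- For a quadratic form `Q` on `S → ℝ` the following are equivalent:
(i) `Q` is a Dirichlet form; (ii) `Q φ ≤ Q ψ` whenever `|φ i - φ j| ≤ |ψ i - ψ j|` for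
all `i, j`; (iii) `Q` vanishes on constant functions and obeys the Markov property. -/
theorem statement5 {S : Type*} [Fintype S] (Q : QuadraticForm ℝ (S → ℝ)) :
    List.TFAE
      [IsDirichletForm (fun ψ => Q ψ),
        ∀ φ ψ : S → ℝ, (∀ i j, |φ i - φ j| ≤ |ψ i - ψ j|) → Q φ ≤ Q ψ,
        (∀ φ : S → ℝ, (∀ i j, φ i = φ j) → Q φ = 0) ∧
          ∀ φ ψ : S → ℝ, (∀ i, φ i = min (ψ i) 1) → Q φ ≤ Q ψ] := by
  classical
  tfae_have 1 → 2 := by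
    rintro ⟨c, hc, hQ⟩ φ ψ h
    simp only [hQ]
    refine Finset.sum_le_sum fun i _ => Finset.sum_le_sum fun j _ => ?_
    refine mul_le_mul_of_nonneg_left ?_ (hc i j)
    rw [← sq_abs (φ i - φ j), ← sq_abs (ψ i - ψ j)]
    exact pow_le_pow_left₀ (abs_nonneg _) (h i j) 2
  tfae_have 2 → 3 := by
    intro h
    have h0 : Q (0 : S → ℝ) = 0 := QuadraticMap.map_zero Q
    constructor
    · intro φ hφ
      have h1 : Q φ ≤ Q 0 := h φ 0 fun i j => by simp [hφ i j]
      have h2 : Q (0 : S → ℝ) ≤ Q φ := h 0 φ fun i j => by simp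
      linarith
    · intro φ ψ hφ
      refine h φ ψ fun i j => ?_
      rw [hφ i, hφ j]
      exact min_one_lipschitz _ _
  tfae_have 3 → 1 := by
    rintro ⟨h0, hM⟩
    set e : S → (S → ℝ) := fun i => fun j => if i = j then 1 else 0 with he
    set p : S → S → ℝ := fun i j => QuadraticMap.polar Q (e i) (e j) with hp
    have hadd : ∀ x y : S → ℝ, Q (x + y) = Q x + Q y + QuadraticMap.polar Q x y := by
      intro x y; rw [QuadraticMap.polar]; ring
    have hsmul : ∀ (a : ℝ) (x : S → ℝ), Q (a • x) = a * a * Q x := by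
      intro a x; rw [QuadraticMap.map_smul]; simp [smul_eq_mul]
    have hone : Q (fun _ => 1) = 0 := h0 _ fun i j => rfl
    -- the expansion of Q via p
    have hexp : ∀ ψ : S → ℝ, Q ψ = (∑ i, ∑ j, ψ i * ψ j * p i j) / 2 := by
      intro ψ
      have hpol : QuadraticMap.polar Q ψ ψ = ∑ i, ∑ j, ψ i * ψ j * p i j := by
        have hψ := pi_eq_sum_univ ψ
        conv_lhs => rw [hψ]
        rw [← QuadraticMap.polarBilin_apply_apply]
        simp only [map_sum, map_smul, LinearMap.sum_apply, LinearMap.smul_apply, smul_eq_mul,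
          LinearMap.coe_sum, Finset.sum_apply, QuadraticMap.polarBilin_apply_apply,
          Finset.mul_sum]
        rw [Finset.sum_comm]
        exact Finset.sum_congr rfl fun i _ => Finset.sum_congr rfl fun j _ => by ring
      have h2 : QuadraticMap.polar Q ψ ψ = 2 * Q ψ := by
        rw [QuadraticMap.polar_self]; simp
      rw [← hpol, h2]; ring
    -- positivity of polar against nonnegative functions
    have key : ∀ φ : S → ℝ, (∀ i, 0 ≤ φ i) → 0 ≤ QuadraticMap.polar Q (fun _ => 1) φ := by
      intro φ hφ
      refine aux_t_small (X := Q φ) fun t ht => ?_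
      have hmin : ∀ i, (fun _ : S => (1 : ℝ)) i = min (((fun _ : S => (1 : ℝ)) + t • φ) i) 1 := by
        intro i
        simp only [Pi.add_apply, Pi.smul_apply, smul_eq_mul]
        rw [min_eq_right (by nlinarith [hφ i])]
      have := hM (fun _ => 1) ((fun _ => 1) + t • φ) hmin
      rw [hone] at this
      calc (0 : ℝ) ≤ Q ((fun _ => 1) + t • φ) := this
        _ = t ^ 2 * Q φ + t * QuadraticMap.polar Q (fun _ => 1) φ := by
            rw [hadd, hone, hsmul, QuadraticMap.polar_smul_right]
            simp only [smul_eq_mul]; ring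
    have hpol1 : ∀ i, QuadraticMap.polar Q (fun _ => 1) (e i) = 0 := by
      intro i
      have h1 : 0 ≤ QuadraticMap.polar Q (fun _ => 1) (e i) :=
        key (e i) fun j => by by_cases h : i = j <;> simp [he, h]
      have h2 : 0 ≤ QuadraticMap.polar Q (fun _ => 1) ((fun _ => 1) - e i) := by
        refine key _ fun j => ?_
        by_cases h : i = j <;> simp [he, h]
      rw [QuadraticMap.polar_sub_right] at h2
      have h3 : QuadraticMap.polar Q (fun _ : S => (1:ℝ)) (fun _ => 1) = 2 * Q (fun _ => 1) := by
        rw [QuadraticMap.polar_self]; simp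
      rw [h3, hone] at h2
      linarith
    -- row sums of p vanish
    have hsum : (∑ j, e j) = fun _ : S => (1 : ℝ) := by
      funext k; simp [he, Finset.sum_ite_eq, Finset.mem_univ]
    have key1 : ∀ i, ∑ j, p i j = 0 := by
      intro i
      have : QuadraticMap.polar Q (e i) (∑ j, e j) = ∑ j, p i j := by
        rw [← QuadraticMap.polarBilin_apply_apply, map_sum]
        exact Finset.sum_congr rfl fun j _ => by rw [QuadraticMap.polarBilin_apply_apply]
      rw [← this, hsum, QuadraticMap.polar_comm, hpol1]
    have key2 : ∀ j, ∑ i, p i j = 0 := by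
      intro j
      have : ∀ i, p i j = p j i := fun i => QuadraticMap.polar_comm _ _ _
      simp only [this]; exact key1 j
    -- off-diagonal nonpositivity
    have hoffd : ∀ i j, i ≠ j → p i j ≤ 0 := by
      intro i j hij
      refine aux_s_large (Z := Q (e i) + QuadraticMap.polar Q (fun _ => 1) (e i)) fun s hs => ?_
      have hval1 : ∀ k, ((fun _ : S => (1:ℝ)) + (-s) • e j) k = 1 + (-s) * e j k :=
        fun k => rfl
      have hval2 : ∀ k, (((fun _ : S => (1:ℝ)) + e i) + (-s) • e j) k =
          (1 + e i k) + (-s) * e j k := fun k => rfl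
      have hmin : ∀ k, ((fun _ : S => (1:ℝ)) + (-s) • e j) k =
          min ((((fun _ : S => (1:ℝ)) + e i) + (-s) • e j) k) 1 := by
        intro k
        rw [hval1, hval2]
        by_cases hjk : j = k
        · subst hjk
          have ej : e j j = 1 := by simp [he]
          have ei : e i j = 0 := by simp [he, hij]
          rw [ej, ei, min_eq_left (by linarith)]
          ring
        · have ej : e j k = 0 := by simp [he, hjk]
          by_cases hik : i = k
          · have ei : e i k = 1 := by simp [he, hik]
            rw [ej, ei, min_eq_right (by linarith)]
            ring
          · have ei : e i k = 0 := by simp [he, hik]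
            rw [ej, ei, min_eq_right (by linarith)]
            ring
      have hle := hM _ _ hmin
      have hL : Q ((fun _ : S => (1:ℝ)) + (-s) • e j) = s ^ 2 * Q (e j) := by
        rw [hadd, hone, hsmul, QuadraticMap.polar_smul_right, hpol1]
        simp only [smul_eq_mul]; ring
      have hR : Q (((fun _ : S => (1:ℝ)) + e i) + (-s) • e j) =
          Q (e i) + QuadraticMap.polar Q (fun _ => 1) (e i) + s ^ 2 * Q (e j) - s * p i j := by
        rw [hadd, hadd, hone, hsmul, QuadraticMap.polar_smul_right,
          QuadraticMap.polar_add_left, hpol1 i, hpol1 j]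
        simp only [smul_eq_mul, hp]
        ring
      rw [hL, hR] at hle
      linarith
    -- construct the Dirichlet coefficients
    refine ⟨fun i j => if i = j then 0 else -(p i j) / 4, fun i j => ?_, fun ψ => ?_⟩
    · by_cases h : i = j
      · simp [h]
      · simp only [if_neg h]
        have := hoffd i j h
        linarith
    · have step : ∀ i j, (if i = j then (0:ℝ) else -(p i j) / 4) * (ψ i - ψ j) ^ 2 =
          (1/2) * (ψ i * ψ j * p i j) - (1/4) * (ψ i ^ 2 * p i j) - (1/4) * (ψ j ^ 2 * p i j) := by
        intro i j
        by_cases h : i = j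
        · subst h; simp; ring
        · rw [if_neg h]; ring
      simp only [step]
      have e1 : ∑ i, ∑ j, ψ i ^ 2 * p i j = 0 := by
        refine Finset.sum_eq_zero fun i _ => ?_
        rw [← Finset.mul_sum, key1, mul_zero]
      have e2 : ∑ i, ∑ j, ψ j ^ 2 * p i j = 0 := by
        rw [Finset.sum_comm]
        refine Finset.sum_eq_zero fun j _ => ?_
        rw [← Finset.mul_sum, key2, mul_zero]
      have e3 : ∑ i, ∑ j, ((1/2) * (ψ i * ψ j * p i j) - (1/4) * (ψ i ^ 2 * p i j)
          - (1/4) * (ψ j ^ 2 * p i j))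
          = (1/2) * (∑ i, ∑ j, ψ i * ψ j * p i j) - (1/4) * (∑ i, ∑ j, ψ i ^ 2 * p i j)
          - (1/4) * (∑ i, ∑ j, ψ j ^ 2 * p i j) := by
        simp only [Finset.sum_sub_distrib, ← Finset.mul_sum]
      rw [e3, e1, e2, hexp ψ]
      ring
  tfae_finish
end

section
/- Let S and T be finite sets and let Q be a Dirichlet form on the disjoint union S + T. Then there exists a Dirichlet form Q' on S such that for every ψ : S → ℝ, Q'(ψ) is the minimum of Q over extensions of ψ; that is, there exists ν₀ : T → ℝ with Q'(ψ) = Q(ψ, ν₀), and Q'(ψ) ≤ Q(ψ, ν) for every ν : T → ℝ (where (ψ, ν) denotes the function on S + T restricting to ψ on S and ν on T). -/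
open Finset

lemma dirichlet_pullback {A B : Type*} [Fintype A] [Fintype B] (e : A ≃ B)
    {Q : (B → ℝ) → ℝ} (h : IsDirichletForm Q) :
    IsDirichletForm (fun g : A → ℝ => Q (g ∘ e.symm)) := by
  obtain ⟨c, hc0, hc⟩ := h
  refine ⟨fun i j => c (e i) (e j), fun i j => hc0 _ _, fun g => ?_⟩
  show Q (g ∘ e.symm) = _
  rw [hc, ← Equiv.sum_comp e]
  refine Finset.sum_congr rfl fun i _ => ?_
  rw [← Equiv.sum_comp e]
  refine Finset.sum_congr rfl fun j _ => ?_
  simp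

lemma elim_one {U : Type*} [Fintype U] (Q : (Option U → ℝ) → ℝ) (hQ : IsDirichletForm Q) :
    ∃ R : (U → ℝ) → ℝ, IsDirichletForm R ∧
      ∀ φ : U → ℝ, (∃ x : ℝ, R φ = Q (fun o => o.elim x φ)) ∧
        ∀ x : ℝ, R φ ≤ Q (fun o => o.elim x φ) := by
  obtain ⟨c, hc0, hc⟩ := hQ
  set d : U → ℝ := fun i => c (some i) none + c none (some i) with hd
  have hd0 : ∀ i, 0 ≤ d i := fun i => add_nonneg (hc0 _ _) (hc0 _ _)
  have ha0 : 0 ≤ ∑ i, d i := Finset.sum_nonneg fun i _ => hd0 i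
  have Qval : ∀ (x : ℝ) (φ : U → ℝ), Q (fun o => o.elim x φ)
      = (∑ i, ∑ j, c (some i) (some j) * (φ i - φ j) ^ 2) + ∑ i, d i * (φ i - x) ^ 2 := by
    intro x φ
    rw [hc]
    simp only [Fintype.sum_option, Option.elim_none, Option.elim_some]
    rw [Finset.sum_add_distrib]
    simp_rw [hd, add_mul]
    rw [Finset.sum_add_distrib]
    have h1 : ∀ j, c none (some j) * (x - φ j) ^ 2 = c none (some j) * (φ j - x) ^ 2 :=
      fun j => by ring
    rw [Finset.sum_congr rfl fun j _ => h1 j]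
    ring
  have sumdx : ∀ (x : ℝ) (φ : U → ℝ), ∑ i, d i * (φ i - x) ^ 2
      = (∑ i, d i * φ i ^ 2) - (∑ i, d i * φ i) * (2 * x) + (∑ i, d i) * x ^ 2 := by
    intro x φ
    have h1 : ∀ i, d i * (φ i - x) ^ 2
        = d i * φ i ^ 2 - d i * φ i * (2 * x) + d i * x ^ 2 := fun i => by ring
    rw [Finset.sum_congr rfl fun i _ => h1 i, Finset.sum_add_distrib, Finset.sum_sub_distrib,
      ← Finset.sum_mul, ← Finset.sum_mul]
  by_cases ha : (∑ i, d i) = 0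
  · have hdz : ∀ i, d i = 0 := fun i =>
      (Finset.sum_eq_zero_iff_of_nonneg fun i _ => hd0 i).1 ha i (Finset.mem_univ i)
    have hz : ∀ (x : ℝ) (φ : U → ℝ), ∑ i, d i * (φ i - x) ^ 2 = 0 := fun x φ =>
      Finset.sum_eq_zero fun i _ => by rw [hdz i]; ring
    refine ⟨fun φ => ∑ i, ∑ j, c (some i) (some j) * (φ i - φ j) ^ 2,
      ⟨fun i j => c (some i) (some j), fun i j => hc0 _ _, fun φ => rfl⟩, fun φ => ?_⟩
    exact ⟨⟨0, by rw [Qval, hz, add_zero]⟩, fun x => by rw [Qval, hz, add_zero]⟩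
  · have hapos : 0 < ∑ i, d i := lt_of_le_of_ne ha0 (Ne.symm ha)
    set a : ℝ := ∑ i, d i with haa
    refine ⟨fun φ => ∑ i, ∑ j,
        (c (some i) (some j) + d i * d j / (2 * a)) * (φ i - φ j) ^ 2,
      ⟨_, fun i j => add_nonneg (hc0 _ _)
        (div_nonneg (mul_nonneg (hd0 i) (hd0 j)) (by linarith)), fun φ => rfl⟩, fun φ => ?_⟩
    -- key identity
    have key : ∑ i, ∑ j, d i * d j * (φ i - φ j) ^ 2
        = 2 * (a * (∑ i, d i * φ i ^ 2) - (∑ i, d i * φ i) ^ 2) := by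
      have inner : ∀ i, ∑ j, d i * d j * (φ i - φ j) ^ 2
          = d i * φ i ^ 2 * (∑ j, d j) - 2 * (d i * φ i) * (∑ j, d j * φ j)
            + d i * (∑ j, d j * φ j ^ 2) := by
        intro i
        simp only [Finset.mul_sum]
        rw [← Finset.sum_sub_distrib, ← Finset.sum_add_distrib]
        exact Finset.sum_congr rfl fun j _ => by ring
      rw [Finset.sum_congr rfl fun i _ => inner i]
      rw [Finset.sum_add_distrib, Finset.sum_sub_distrib, ← Finset.sum_mul, ← Finset.sum_mul,
        ← Finset.sum_mul]
      have h2 : ∑ i, 2 * (d i * φ i) = 2 * ∑ i, d i * φ i := by rw [← Finset.mul_sum]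
      rw [h2, ← haa]
      ring
    have Rval : ∑ i, ∑ j, (c (some i) (some j) + d i * d j / (2 * a)) * (φ i - φ j) ^ 2
        = (∑ i, ∑ j, c (some i) (some j) * (φ i - φ j) ^ 2)
          + ((∑ i, d i * φ i ^ 2) - (∑ i, d i * φ i) ^ 2 / a) := by
      simp_rw [add_mul, Finset.sum_add_distrib]
      congr 1
      have h2 : ∀ i j, d i * d j / (2 * a) * (φ i - φ j) ^ 2
          = d i * d j * (φ i - φ j) ^ 2 / (2 * a) := fun i j => by ring
      simp_rw [h2, ← Finset.sum_div]
      rw [key]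
      field_simp
    constructor
    · refine ⟨(∑ i, d i * φ i) / a, ?_⟩
      show ∑ i, ∑ j, (c (some i) (some j) + d i * d j / (2 * a)) * (φ i - φ j) ^ 2 = _
      rw [Qval, sumdx, Rval]
      field_simp
      ring
    · intro x
      show ∑ i, ∑ j, (c (some i) (some j) + d i * d j / (2 * a)) * (φ i - φ j) ^ 2 ≤ _
      rw [Qval, sumdx, Rval]
      have hm : (∑ i, d i * φ i) ^ 2 / a * a = (∑ i, d i * φ i) ^ 2 := by field_simp
      nlinarith [sq_nonneg (a * x - (∑ i, d i * φ i)), hapos, hm]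

/-- Minimizing a Dirichlet form on `S + T` over the `T`-variables
yields a Dirichlet form on `S`, the minimum being attained. -/
theorem statement6 {S T : Type*} [Fintype S] [Fintype T]
    (Q : (S ⊕ T → ℝ) → ℝ) (hQ : IsDirichletForm Q) :
    ∃ Q' : (S → ℝ) → ℝ, IsDirichletForm Q' ∧
      ∀ ψ : S → ℝ,
        (∃ ν₀ : T → ℝ, Q' ψ = Q (Sum.elim ψ ν₀)) ∧
        ∀ ν : T → ℝ, Q' ψ ≤ Q (Sum.elim ψ ν) := by
  classical
  have main : ∀ (T' : Type _) [Finite T'], ∀ [Fintype T'] (Q : (S ⊕ T' → ℝ) → ℝ),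
      IsDirichletForm Q → ∃ Q' : (S → ℝ) → ℝ, IsDirichletForm Q' ∧
        ∀ ψ : S → ℝ, (∃ ν₀ : T' → ℝ, Q' ψ = Q (Sum.elim ψ ν₀)) ∧
          ∀ ν : T' → ℝ, Q' ψ ≤ Q (Sum.elim ψ ν) := by
    intro T' _
    induction T' using Finite.induction_empty_option with
    | @of_equiv α β e hα =>
      intro _ Q hQ
      haveI : Fintype α := Fintype.ofEquiv β e.symm
      set e2 : S ⊕ α ≃ S ⊕ β := Equiv.sumCongr (Equiv.refl S) e with he2
      obtain ⟨Q', hQ', h⟩ := hα (fun f : S ⊕ α → ℝ => Q (f ∘ e2.symm))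
        (dirichlet_pullback e2 hQ)
      refine ⟨Q', hQ', fun ψ => ?_⟩
      obtain ⟨⟨ν₀, hν₀⟩, hle⟩ := h ψ
      constructor
      · refine ⟨ν₀ ∘ e.symm, ?_⟩
        rw [hν₀]
        show Q _ = Q _
        congr 1
        funext z
        rcases z with s | t <;> simp [he2]
      · intro ν
        have h1 := hle (ν ∘ e)
        have h2 : (Sum.elim ψ (ν ∘ e)) ∘ ⇑e2.symm = Sum.elim ψ ν := by
          funext z; rcases z with s | t <;> simp [he2]
        show Q' ψ ≤ Q _
        rw [← h2]
        exact h1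
    | h_empty =>
      intro _ Q hQ
      obtain ⟨c, hc0, hc⟩ := hQ
      refine ⟨fun ψ => Q (Sum.elim ψ PEmpty.elim),
        ⟨fun i j => c (.inl i) (.inl j), fun i j => hc0 _ _, fun ψ => ?_⟩, fun ψ => ?_⟩
      · show Q _ = _
        rw [hc]
        simp [Fintype.sum_sum_type]
      · refine ⟨⟨PEmpty.elim, rfl⟩, fun ν => le_of_eq ?_⟩
        show Q _ = Q _
        congr 1
        funext z
        rcases z with s | t
        · rfl
        · exact t.elim
    | @h_option α _ hα =>
      intro _ Q hQ
      -- Q : (S ⊕ Option α → ℝ) → ℝ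
      let e : Option (S ⊕ α) ≃ S ⊕ Option α :=
        { toFun := fun o => o.elim (Sum.inr none) (Sum.map id some)
          invFun := Sum.elim (fun s => some (Sum.inl s))
            (fun t => Option.elim t none (fun t' => some (Sum.inr t')))
          left_inv := by rintro (_ | (s | t)) <;> rfl
          right_inv := by
            rintro (s | t)
            · rfl
            · rcases t with _ | t <;> rfl }
      obtain ⟨R, hR, hmin⟩ := elim_one (fun g : Option (S ⊕ α) → ℝ => Q (g ∘ e.symm))
        (dirichlet_pullback e hQ)
      obtain ⟨Q', hQ', h⟩ := hα R hR
      refine ⟨Q', hQ', fun ψ => ?_⟩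
      obtain ⟨⟨ν₀, hν₀⟩, hle⟩ := h ψ
      obtain ⟨⟨x₀, hx₀⟩, _⟩ := hmin (Sum.elim ψ ν₀)
      constructor
      · refine ⟨fun ot => Option.elim ot x₀ ν₀, ?_⟩
        rw [hν₀, hx₀]
        show Q _ = Q _
        congr 1
        funext z
        rcases z with s | t
        · rfl
        · rcases t with _ | t <;> rfl
      · intro ν
        have h2 := (hmin (Sum.elim ψ fun t => ν (some t))).2 (ν none)
        have h3 := hle fun t => ν (some t)
        have h4 : ((fun o : Option (S ⊕ α) =>
            Option.elim o (ν none) (Sum.elim ψ fun t => ν (some t))) ∘ ⇑e.symm)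
            = Sum.elim ψ ν := by
          funext z
          rcases z with s | t
          · rfl
          · rcases t with _ | t <;> rfl
        calc Q' ψ ≤ R (Sum.elim ψ fun t => ν (some t)) := h3
          _ ≤ Q (Sum.elim ψ ν) := by rw [← h4]; exact h2
  exact main T Q hQ
end

section
/- Let S be a finite set and Q : (S → ℝ) → ℝ. Then Q is a Dirichlet form on S if and only if Q is the power functional of some circuit of linear resistors with terminal set S; that is, if and only if there exist a circuit of linear resistors (E, N, s, t, r) together with an injection ι : S → N such that for every ψ : S → ℝ, Q(ψ) is the minimum of P(φ) over all potentials φ : N → ℝ with φ∘ι = ψ (this minimum being attained). -/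
open Finset

/-!
A circuit's power functional is itself a Dirichlet energy: an edge `e` from `j` to `i`
contributes the conductance `1 / (2 r e)` to the coefficient `c i j`. Conversely a Dirichlet
energy with coefficients `c` is the power of the circuit on the same nodes having one resistor
of resistance `1 / (2 c i j)` for each nonzero `c i j`, every node being a terminal.

What remains is that minimizing a Dirichlet energy over the potentials of the interior nodes
yields a Dirichlet energy on the terminals. For a single interior node `v` the energy is
`∑ i, a i (x - ψ i) ^ 2 + (terms free of x)` in its potential `x`, where `a i` is the conductance
between `v` and `i`; the minimum over `x` of the first sum is the Dirichlet energy with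
coefficients `a i a j / (2 ∑ a)` (the star-mesh transform). Interior nodes are eliminated one at
a time, and minima over successive fibres compose.
-/

open Function

section

variable {S N M : Type*}

noncomputable def dirichletEnergy [Fintype N] (c : N → N → ℝ) (φ : N → ℝ) : ℝ :=
  ∑ i, ∑ j, c i j * (φ i - φ j) ^ 2

noncomputable def circuitPower {E : Type*} [Fintype E] (s t : E → N) (r : E → ℝ)
    (φ : N → ℝ) : ℝ :=
  (1 / 2) * ∑ e, (1 / r e) * (φ (t e) - φ (s e)) ^ 2

def IsTrace (F : (N → ℝ) → ℝ) (ι : S → N) (G : (S → ℝ) → ℝ) : Prop :=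
  ∀ ψ : S → ℝ, (∃ φ : N → ℝ, (∀ x, φ (ι x) = ψ x) ∧ F φ = G ψ) ∧
    ∀ φ : N → ℝ, (∀ x, φ (ι x) = ψ x) → G ψ ≤ F φ

namespace IsTrace

theorem id_of_eq {F G : (S → ℝ) → ℝ} (h : F = G) : IsTrace F id G := h ▸ fun ψ =>
  ⟨⟨ψ, fun _ => rfl, rfl⟩, fun φ hφ => by rw [show φ = ψ from funext hφ]⟩

variable {F : (N → ℝ) → ℝ} {ι : S → N} {G : (S → ℝ) → ℝ}

theorem trans {T : Type*} {κ : T → S} {H : (T → ℝ) → ℝ} (hF : IsTrace F ι G)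
    (hG : IsTrace G κ H) : IsTrace F (ι ∘ κ) H := by
  intro ψ
  obtain ⟨⟨χ, hχ, hGχ⟩, hH⟩ := hG ψ
  obtain ⟨⟨φ, hφ, hFφ⟩, -⟩ := hF χ
  refine ⟨⟨φ, fun x => (hφ (κ x)).trans (hχ x), hFφ.trans hGχ⟩, fun φ' hφ' => ?_⟩
  calc H ψ ≤ G (φ' ∘ ι) := hH _ hφ'
    _ ≤ F φ' := (hF (φ' ∘ ι)).2 φ' fun _ => rfl

theorem comp_equiv (h : IsTrace F ι G) (e : N ≃ M) :
    IsTrace (fun φ => F (φ ∘ e)) (e ∘ ι) G := by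
  intro ψ
  obtain ⟨⟨φ, hφ, hFφ⟩, hG⟩ := h ψ
  refine ⟨⟨φ ∘ e.symm, fun x => by simp [hφ], by simpa [Function.comp_def] using hFφ⟩,
    fun φ' hφ' => hG _ hφ'⟩

theorem unique {G' : (S → ℝ) → ℝ} (h : IsTrace F ι G) (h' : IsTrace F ι G') : G = G' := by
  funext ψ
  obtain ⟨⟨φ, hφ, hFφ⟩, hG⟩ := h ψ
  obtain ⟨⟨φ', hφ', hFφ'⟩, hG'⟩ := h' ψ
  exact le_antisymm (hFφ' ▸ hG φ' hφ') (hFφ ▸ hG' φ hφ)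

end IsTrace

theorem dirichletEnergy_comp_equiv [Fintype N] [Fintype M] (c : N → N → ℝ) (e : M ≃ N)
    (φ : N → ℝ) : dirichletEnergy (fun i j => c (e i) (e j)) (φ ∘ e) = dirichletEnergy c φ :=
  Fintype.sum_equiv e _ _ fun _ => Fintype.sum_equiv e _ _ fun _ => rfl

section WeightedVariance

variable [Fintype N] (a φ : N → ℝ)

theorem sum_mul_sub_sq_eq (x : ℝ) :
    ∑ j, a j * (x - φ j) ^ 2
      = (∑ j, a j) * x ^ 2 - 2 * (∑ j, a j * φ j) * x + ∑ j, a j * φ j ^ 2 := by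
  have expand (j : N) :
      a j * (x - φ j) ^ 2 = a j * x ^ 2 - 2 * (a j * φ j) * x + a j * φ j ^ 2 := by
    ring
  simp only [expand, sum_add_distrib, sum_sub_distrib, ← mul_sum, ← sum_mul]

theorem sum_sum_mul_mul_sub_sq_eq :
    ∑ j, ∑ k, a j * a k * (φ j - φ k) ^ 2
      = 2 * ((∑ j, a j) * ∑ j, a j * φ j ^ 2 - (∑ j, a j * φ j) ^ 2) := by
  have expand (j k : N) : a j * a k * (φ j - φ k) ^ 2
      = a j * φ j ^ 2 * a k - 2 * (a j * φ j) * (a k * φ k) + a j * (a k * φ k ^ 2) := by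
    ring
  simp only [expand, sum_add_distrib, sum_sub_distrib, ← mul_sum, ← sum_mul]
  ring

end WeightedVariance

theorem isLeast_range_sum_mul_sub_sq [Fintype N] (a φ : N → ℝ) (ha : ∀ j, 0 ≤ a j) :
    IsLeast (Set.range fun x => ∑ j, a j * (x - φ j) ^ 2)
      ((∑ j, ∑ k, a j * a k * (φ j - φ k) ^ 2) / (2 * ∑ j, a j)) := by
  obtain hA | hA := (sum_nonneg fun j _ => ha j : 0 ≤ ∑ j, a j).eq_or_lt
  · have hz : ∀ j, a j = 0 := fun j =>
      (sum_eq_zero_iff_of_nonneg fun j _ => ha j).1 hA.symm j (mem_univ j)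
    simp [hz]
  · simp only [sum_mul_sub_sq_eq a φ, sum_sum_mul_mul_sub_sq_eq a φ]
    refine ⟨⟨(∑ j, a j * φ j) / ∑ j, a j, ?_⟩, ?_⟩
    · field_simp
      ring
    · rintro _ ⟨x, rfl⟩
      rw [div_le_iff₀ (by positivity)]
      nlinarith [sq_nonneg ((∑ j, a j) * x - ∑ j, a j * φ j)]

section StarMesh

variable (c : Option N → Option N → ℝ)

def starWeight (i : N) : ℝ := c none (some i) + c (some i) none

theorem starWeight_nonneg (hc : ∀ i j, 0 ≤ c i j) (i : N) : 0 ≤ starWeight c i :=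
  add_nonneg (hc _ _) (hc _ _)

variable [Fintype N]

noncomputable def starMesh (i j : N) : ℝ :=
  c (some i) (some j) + starWeight c i * starWeight c j / (2 * ∑ k, starWeight c k)

theorem starMesh_nonneg (hc : ∀ i j, 0 ≤ c i j) (i j : N) : 0 ≤ starMesh c i j :=
  have hw := starWeight_nonneg c hc
  add_nonneg (hc _ _) <| div_nonneg (mul_nonneg (hw i) (hw j)) <|
    mul_nonneg zero_le_two (sum_nonneg fun k _ => hw k)

theorem dirichletEnergy_option_elim (x : ℝ) (ψ : N → ℝ) :
    dirichletEnergy c (fun o => o.elim x ψ)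
      = ∑ i, starWeight c i * (x - ψ i) ^ 2
        + dirichletEnergy (fun i j => c (some i) (some j)) ψ := by
  simp only [dirichletEnergy, Fintype.sum_option, Option.elim, sub_self, starWeight, add_mul,
    sum_add_distrib, sub_sq_comm (ψ _) x]
  ring

theorem dirichletEnergy_starMesh (ψ : N → ℝ) :
    dirichletEnergy (starMesh c) ψ
      = (∑ i, ∑ j, starWeight c i * starWeight c j * (ψ i - ψ j) ^ 2)
          / (2 * ∑ k, starWeight c k)
        + dirichletEnergy (fun i j => c (some i) (some j)) ψ := by
  simp only [dirichletEnergy, starMesh, add_mul, sum_add_distrib, sum_div, div_mul_eq_mul_div]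
  ring

theorem isTrace_starMesh (hc : ∀ i j, 0 ≤ c i j) :
    IsTrace (dirichletEnergy c) some (dirichletEnergy (starMesh c)) := by
  intro ψ
  obtain ⟨⟨x, hx⟩, hmin⟩ :=
    isLeast_range_sum_mul_sub_sq (starWeight c) ψ (starWeight_nonneg c hc)
  refine ⟨⟨fun o => o.elim x ψ, fun _ => rfl, ?_⟩, fun φ hφ => ?_⟩
  · rw [dirichletEnergy_option_elim, dirichletEnergy_starMesh, ← hx]
  · have hφ' : φ = fun o => o.elim (φ none) ψ := funext fun o => by cases o <;> simp [hφ]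
    rw [hφ', dirichletEnergy_option_elim, dirichletEnergy_starMesh]
    exact add_le_add (hmin ⟨φ none, rfl⟩) le_rfl

end StarMesh

theorem exists_isTrace_dirichletEnergy [Fintype S] [Fintype N] (ι : S → N) (hι : Injective ι)
    (c : N → N → ℝ) (hc : ∀ i j, 0 ≤ c i j) :
    ∃ c' : S → S → ℝ, (∀ i j, 0 ≤ c' i j) ∧
      IsTrace (dirichletEnergy c) ι (dirichletEnergy c') := by
  classical
  induction hn : Fintype.card N using Nat.strong_induction_on generalizing N with
  | _ n ih =>
  by_cases hsurj : Surjective ι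
  · refine ⟨fun i j => c (ι i) (ι j), fun _ _ => hc _ _, ?_⟩
    let e := Equiv.ofBijective ι ⟨hι, hsurj⟩
    have := (IsTrace.id_of_eq (F := dirichletEnergy fun i j => c (e i) (e j)) rfl).comp_equiv e
    rwa [funext (dirichletEnergy_comp_equiv c e)] at this
  · obtain ⟨v, hv⟩ := not_forall.1 hsurj
    let e := Equiv.optionSubtypeNe v
    let ι₀ : S → {w // w ≠ v} := fun x => ⟨ι x, fun h => hv ⟨x, h⟩⟩
    obtain ⟨c', hc', htr⟩ := ih _ (hn ▸ Fintype.card_subtype_lt (not_not.2 rfl)) ι₀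
      (fun x y h => hι (congrArg Subtype.val h))
      (starMesh fun i j => c (e i) (e j)) (starMesh_nonneg _ fun _ _ => hc _ _) rfl
    refine ⟨c', hc', ?_⟩
    have := ((isTrace_starMesh _ fun _ _ => hc _ _).trans htr).comp_equiv e
    rwa [funext (dirichletEnergy_comp_equiv c e)] at this

section Circuit

variable {E : Type*} [Fintype E] [DecidableEq N] (s t : E → N) (r : E → ℝ)

noncomputable def edgeConductance (i j : N) : ℝ :=
  ∑ e with t e = i ∧ s e = j, (2 * r e)⁻¹

theorem edgeConductance_nonneg (hr : ∀ e, 0 ≤ r e) (i j : N) :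
    0 ≤ edgeConductance s t r i j :=
  sum_nonneg fun e _ => inv_nonneg.2 (mul_nonneg zero_le_two (hr e))

theorem circuitPower_eq_dirichletEnergy [Fintype N] :
    circuitPower s t r = dirichletEnergy (edgeConductance s t r) := by
  funext φ
  have (i j : N) : edgeConductance s t r i j * (φ i - φ j) ^ 2
      = ∑ e with t e = i ∧ s e = j, (2 * r e)⁻¹ * (φ (t e) - φ (s e)) ^ 2 := by
    rw [edgeConductance, sum_mul]
    exact sum_congr rfl fun e he => by obtain ⟨rfl, rfl⟩ := (mem_filter.1 he).2; rfl
  calc circuitPower s t r φ = ∑ e, (2 * r e)⁻¹ * (φ (t e) - φ (s e)) ^ 2 := by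
        rw [circuitPower, mul_sum]
        exact sum_congr rfl fun e _ => by ring
    _ = ∑ p : N × N, ∑ e with (t e, s e) = p, (2 * r e)⁻¹ * (φ (t e) - φ (s e)) ^ 2 :=
        (sum_fiberwise _ _ _).symm
    _ = dirichletEnergy (edgeConductance s t r) φ := by
        simp only [Fintype.sum_prod_type, Prod.mk.injEq, dirichletEnergy, this]

end Circuit

theorem circuitPower_subtype_ne_zero [Fintype N] (c : N → N → ℝ)
    [Fintype {p : N × N // c p.1 p.2 ≠ 0}] :
    circuitPower (fun p : {p : N × N // c p.1 p.2 ≠ 0} => p.1.2) (fun p => p.1.1)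
      (fun p => (2 * c p.1.1 p.1.2)⁻¹) = dirichletEnergy c := by
  classical
  funext φ
  calc _ = ∑ p : {p : N × N // c p.1 p.2 ≠ 0}, c p.1.1 p.1.2 * (φ p.1.1 - φ p.1.2) ^ 2 := by
        rw [circuitPower, mul_sum]
        exact sum_congr rfl fun p _ => by simp only [one_div, inv_inv]; ring
    _ = ∑ p : N × N with c p.1 p.2 ≠ 0, c p.1 p.2 * (φ p.1 - φ p.2) ^ 2 :=
        (sum_subtype _ (fun p => mem_filter_univ p)
          fun p : N × N => c p.1 p.2 * (φ p.1 - φ p.2) ^ 2).symm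
    _ = ∑ p : N × N, c p.1 p.2 * (φ p.1 - φ p.2) ^ 2 :=
        sum_filter_of_ne fun _ _ h => left_ne_zero_of_mul h
    _ = dirichletEnergy c φ := Fintype.sum_prod_type _

theorem exists_fin_circuit_of_isTrace {E : Type*} [Fintype E] [Fintype N] {s t : E → N}
    {r : E → ℝ} (hr : ∀ e, 0 < r e) {ι : S → N} (hι : Injective ι) {Q : (S → ℝ) → ℝ}
    (h : IsTrace (circuitPower s t r) ι Q) :
    ∃ (nE nN : ℕ) (s t : Fin nE → Fin nN) (r : Fin nE → ℝ) (ι : S → Fin nN),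
      (∀ e, 0 < r e) ∧ Injective ι ∧ IsTrace (circuitPower s t r) ι Q := by
  let eE := Fintype.equivFin E
  let eN := Fintype.equivFin N
  refine ⟨_, _, eN ∘ s ∘ eE.symm, eN ∘ t ∘ eE.symm, r ∘ eE.symm, eN ∘ ι, fun _ => hr _,
    eN.injective.comp hι, ?_⟩
  have hpow : (fun φ => circuitPower s t r (φ ∘ eN))
      = circuitPower (eN ∘ s ∘ eE.symm) (eN ∘ t ∘ eE.symm) (r ∘ eE.symm) :=
    funext fun φ => congrArg _ (Fintype.sum_equiv eE _ _ fun e => by simp)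
  exact hpow ▸ h.comp_equiv eN

end

/-- `Q : (S → ℝ) → ℝ` is a Dirichlet form if and only if it is the
power functional of some circuit of linear resistors with terminal set `S`: there are a
circuit (edges `Fin nE`, nodes `Fin nN`, source `s`, target `t`, resistances `r > 0`)
and an injection `ι : S → Fin nN` such that for every `ψ`, `Q ψ` is the attained minimum
of the extended power functional over all potentials `φ` with `φ ∘ ι = ψ`. -/
theorem statement7 {S : Type*} [Fintype S] (Q : (S → ℝ) → ℝ) :
    IsDirichletForm Q ↔
      ∃ (nE nN : ℕ) (s t : Fin nE → Fin nN) (r : Fin nE → ℝ) (ι : S → Fin nN),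
        (∀ e, 0 < r e) ∧ Function.Injective ι ∧
        ∀ ψ : S → ℝ,
          (∃ φ : Fin nN → ℝ, (∀ x, φ (ι x) = ψ x) ∧
            (1 / 2) * ∑ e, (1 / r e) * (φ (t e) - φ (s e)) ^ 2 = Q ψ) ∧
          ∀ φ : Fin nN → ℝ, (∀ x, φ (ι x) = ψ x) →
            Q ψ ≤ (1 / 2) * ∑ e, (1 / r e) * (φ (t e) - φ (s e)) ^ 2 := by
  classical
  constructor
  · rintro ⟨c, hc, hQ⟩
    have hr (p : {p : S × S // c p.1 p.2 ≠ 0}) : 0 < (2 * c p.1.1 p.1.2)⁻¹ :=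
      inv_pos.2 (mul_pos two_pos ((hc _ _).lt_of_ne' p.2))
    exact exists_fin_circuit_of_isTrace hr injective_id
      (IsTrace.id_of_eq ((circuitPower_subtype_ne_zero c).trans (funext hQ).symm))
  · rintro ⟨nE, nN, s, t, r, ι, hr, hι, hQ⟩
    obtain ⟨c, hc, hcQ⟩ := exists_isTrace_dirichletEnergy ι hι _
      (edgeConductance_nonneg s t r fun e => (hr e).le)
    rw [← circuitPower_eq_dirichletEnergy] at hcQ
    exact ⟨c, hc, fun ψ => (congrFun (hcQ.unique hQ) ψ).symm⟩
end

section
/- Let 𝔽 be a field in which 2 ≠ 0, S a finite set, c : S × S → 𝔽 arbitrary coefficients, and P : (S → 𝔽) → 𝔽 the quadratic form P(φ) = ∑_{i,j ∈ S} c_{ij}·(φ(i) − φ(j))² (in particular this covers every Dirichlet form over 𝔽 on S). Let R ⊆ S and ψ : R → 𝔽. If φ and φ' are both realizable extensions of ψ with respect to P, then P(φ) = P(φ'). -/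
open Finset

/-- The quadratic form `χ ↦ ∑_{i,j} c i j * (χ i - χ j)^2` determined by
coefficients `c`. -/
def qSum {F S : Type*} [Field F] [Fintype S] (c : S → S → F) (χ : S → F) : F :=
  ∑ i, ∑ j, c i j * (χ i - χ j) ^ 2

/-- The formal derivative `df_φ(χ) = f(φ + χ) - f(φ) - f(χ)`. -/
def formalDeriv {F S : Type*} [Field F] (f : (S → F) → F) (φ χ : S → F) : F :=
  f (φ + χ) - f φ - f χ

/-- The indicator function `δ_n` of a point `n`. -/
def delta {F S : Type*} [Field F] [DecidableEq S] (n : S) : S → F :=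
  fun m => if m = n then 1 else 0

/-- `φ` is a realizable extension of `ψ : R → F` with respect to `P`: it agrees with `ψ`
on `R` and the formal derivative of `P` at `φ` vanishes in direction `δ_s` for every
`s ∉ R`. -/
def RealizableExt {F S : Type*} [Field F] [Fintype S] [DecidableEq S]
    (P : (S → F) → F) (R : Finset S) (ψ : R → F) (φ : S → F) : Prop :=
  (∀ x : R, φ x = ψ x) ∧ ∀ x ∉ R, formalDeriv P φ (delta x) = 0

lemma fd_eq {F S : Type*} [Field F] [Fintype S] (c : S → S → F) (φ χ : S → F) :
    formalDeriv (qSum c) φ χ = ∑ i, ∑ j, c i j * (2 * (φ i - φ j) * (χ i - χ j)) := by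
  unfold formalDeriv qSum
  rw [← Finset.sum_sub_distrib, ← Finset.sum_sub_distrib]
  refine Finset.sum_congr rfl fun i _ => ?_
  rw [← Finset.sum_sub_distrib, ← Finset.sum_sub_distrib]
  refine Finset.sum_congr rfl fun j _ => ?_
  simp only [Pi.add_apply]
  ring

lemma sum_mul_delta {F S : Type*} [Field F] [Fintype S] [DecidableEq S]
    (η : S → F) (i : S) : ∑ s, η s * delta (F := F) s i = η i := by
  simp [delta, mul_ite]

lemma fd_lin {F S : Type*} [Field F] [Fintype S] [DecidableEq S] (c : S → S → F)
    (φ η : S → F) :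
    formalDeriv (qSum c) φ η = ∑ s, η s * formalDeriv (qSum c) φ (delta s) := by
  simp only [fd_eq]
  have : ∀ s : S, η s * (∑ i, ∑ j, c i j * (2 * (φ i - φ j) * (delta s i - delta s j)))
      = ∑ i, ∑ j, η s * (c i j * (2 * (φ i - φ j) * (delta s i - delta s j))) := by
    intro s; rw [Finset.mul_sum]; exact Finset.sum_congr rfl fun i _ => Finset.mul_sum _ _ _
  simp only [this]
  rw [show (∑ s : S, ∑ i, ∑ j, η s * (c i j * (2 * (φ i - φ j) * (delta s i - delta s j))))
      = ∑ i, ∑ j, ∑ s : S, η s * (c i j * (2 * (φ i - φ j) * (delta s i - delta s j))) by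
    rw [Finset.sum_comm]; exact Finset.sum_congr rfl fun i _ => Finset.sum_comm]
  refine Finset.sum_congr rfl fun i _ => ?_
  refine Finset.sum_congr rfl fun j _ => ?_
  have h1 := sum_mul_delta η i
  have h2 := sum_mul_delta η j
  calc c i j * (2 * (φ i - φ j) * (η i - η j))
      = c i j * (2 * (φ i - φ j)) * (∑ s, η s * delta (F := F) s i)
        - c i j * (2 * (φ i - φ j)) * (∑ s, η s * delta (F := F) s j) := by
        rw [h1, h2]; ring
    _ = ∑ s, η s * (c i j * (2 * (φ i - φ j) * (delta s i - delta s j))) := by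
        rw [Finset.mul_sum, Finset.mul_sum, ← Finset.sum_sub_distrib]
        exact Finset.sum_congr rfl fun s _ => by ring

lemma qSum_neg {F S : Type*} [Field F] [Fintype S] (c : S → S → F) (η : S → F) :
    qSum c (-η) = qSum c η := by
  unfold qSum
  refine Finset.sum_congr rfl fun i _ => Finset.sum_congr rfl fun j _ => ?_
  simp only [Pi.neg_apply]; ring

/-- For a quadratic form `P(φ) = ∑_{i,j} c i j * (φ i - φ j)^2` over a
field in which `2 ≠ 0`, any two realizable extensions of `ψ : R → F` give the same value
of `P`. -/
theorem statement9 {F S : Type*} [Field F] [Fintype S] [DecidableEq S]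
    (h2 : (2 : F) ≠ 0) (c : S → S → F) (R : Finset S) (ψ : R → F) (φ φ' : S → F)
    (hφ : RealizableExt (qSum c) R ψ φ) (hφ' : RealizableExt (qSum c) R ψ φ') :
    qSum c φ = qSum c φ' := by
  set η : S → F := φ' - φ with hη
  have hηR : ∀ x ∈ R, η x = 0 := by
    intro x hx
    have := (hφ.1 ⟨x, hx⟩).trans (hφ'.1 ⟨x, hx⟩).symm
    simp [hη, this]
  have hB : ∀ (θ ζ : S → F), (∀ x ∉ R, formalDeriv (qSum c) θ (delta x) = 0) →
      (∀ x ∈ R, ζ x = 0) → formalDeriv (qSum c) θ ζ = 0 := by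
    intro θ ζ hθ hζ
    rw [fd_lin]
    refine Finset.sum_eq_zero fun s _ => ?_
    by_cases hs : s ∈ R
    · rw [hζ s hs, zero_mul]
    · rw [hθ s hs, mul_zero]
  have e1 : qSum c φ' - qSum c φ - qSum c η = 0 := by
    have := hB φ η hφ.2 hηR
    unfold formalDeriv at this
    rwa [show φ + η = φ' by ext x; simp [hη]] at this
  have e2 : qSum c φ - qSum c φ' - qSum c η = 0 := by
    have := hB φ' (-η) hφ'.2 (fun x hx => by simp [hηR x hx])
    unfold formalDeriv at this
    rwa [show φ' + -η = φ by ext x; simp [hη], qSum_neg] at this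
  have hq : qSum c η = 0 := by
    have h : 2 * qSum c η = 0 := by linear_combination -e1 - e2
    exact (mul_eq_zero.mp h).resolve_left h2
  linear_combination e2 + hq
end

section
/- Let 𝔽 be a field of characteristic different from 2 and N a finite set. Equip W = (N → 𝔽) × ((N → 𝔽) →ₗ 𝔽) (the space of potentials together with its dual space of currents) with the symplectic form ω((φ, i), (φ', i')) = i'(φ) − i(φ'). (a) For every quadratic form Q on N → 𝔽, the subspace L_Q = {(φ, dQ_φ) | φ : N → 𝔽}, where dQ_φ(χ) = Q(φ + χ) − Q(φ) − Q(χ), is a Lagrangian subspace of W (i.e. L_Q equals its ω-complement), and L_Q has trivial intersection with {0} × ((N → 𝔽) →ₗ 𝔽). (b) Conversely, every Lagrangian subspace L of W whose intersection with {0} × ((N → 𝔽) →ₗ 𝔽) is trivial equals L_Q for a unique quadratic form Q on N → 𝔽. -/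
/-!
`L_Q` is the graph of the polar form `B = Q.polarBilin`. The `ω`-complement of the graph of any
bilinear `B` is the graph of its transpose `B.flip`, so a graph is Lagrangian exactly when `B` is
symmetric, and when `2` is invertible symmetric bilinear forms are the polar forms of unique
quadratic forms. A Lagrangian `L` meeting `{0} × dual` trivially projects injectively onto the
potentials, and also surjectively: a current `i` extending `v ↦ v.2 φ` along this projection
makes `(φ, i)` orthogonal to `L`, hence a point of `L` above `φ`. So `L` is a graph.
-/

/-- The symplectic form on the space `W = (N → F) × ((N → F) →ₗ[F] F)` of
potential–current pairs: `ω((φ, i), (φ', i')) = i'(φ) - i(φ')`. -/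
def omegaW {F N : Type*} [Field F]
    (p q : (N → F) × ((N → F) →ₗ[F] F)) : F :=
  q.2 p.1 - p.2 q.1

/-- The subspace `L_Q = {(φ, dQ_φ)}`, where `dQ_φ(χ) = Q(φ+χ) - Q(φ) - Q(χ)`. -/
def graphSet {F N : Type*} [Field F] (Q : QuadraticForm F (N → F)) :
    Set ((N → F) × ((N → F) →ₗ[F] F)) :=
  {p | ∀ χ : N → F, p.2 χ = Q (p.1 + χ) - Q p.1 - Q χ}

theorem LinearMap.graph_injective {R M M' : Type*} [Semiring R] [AddCommMonoid M] [Module R M]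
    [AddCommMonoid M'] [Module R M'] :
    Function.Injective (LinearMap.graph : (M →ₗ[R] M') → Submodule R (M × M')) := by
  intro f g hfg
  ext x
  have hx : (x, f x) ∈ g.graph := hfg ▸ rfl
  exact hx

theorem Submodule.fst_comp_subtype_injective {R M M' : Type*} [Ring R] [AddCommGroup M]
    [Module R M] [AddCommGroup M'] [Module R M'] {L : Submodule R (M × M')}
    (hvert : ∀ y : M', ((0 : M), y) ∈ L → y = 0) :
    Function.Injective (Prod.fst ∘ L.subtype) := by
  rw [← LinearMap.coe_fst (R := R) (M₂ := M'), ← LinearMap.coe_comp,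
    injective_iff_map_eq_zero]
  rintro ⟨⟨x, y⟩, hxy⟩ (hx : x = 0)
  subst hx
  simp [hvert y hxy]

theorem QuadraticMap.existsUnique_polarBilin_eq {R M P : Type*} [CommRing R] [AddCommGroup M]
    [Module R M] [AddCommGroup P] [Module R P] (h2 : IsUnit (2 : R))
    (B : LinearMap.BilinMap R M P) (hB : B.flip = B) :
    ∃! Q : QuadraticMap R M P, Q.polarBilin = B := by
  have hpolar : (h2.unit⁻¹ • B).toQuadraticMap.polarBilin = B := by
    ext x y
    have hyx : B y x = B x y := LinearMap.congr_fun₂ hB x y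
    rw [polarBilin_apply_apply, LinearMap.BilinMap.polar_toQuadraticMap]
    simp only [LinearMap.smul_apply, hyx]
    rw [← two_smul R, Units.smul_def, smul_smul, IsUnit.mul_val_inv, one_smul]
  exact ⟨_, hpolar, fun Q hQ => polarBilin_injective h2 (hQ.trans hpolar.symm)⟩

section

variable {F N : Type*} [Field F]

theorem graphSet_eq_graph (Q : QuadraticForm F (N → F)) :
    graphSet Q = (Q.polarBilin.graph : Set ((N → F) × ((N → F) →ₗ[F] F))) := by
  ext ⟨φ, i⟩
  simp only [graphSet, Set.mem_ofPred_eq, SetLike.mem_coe, LinearMap.mem_graph_iff,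
    LinearMap.ext_iff, QuadraticMap.polarBilin_apply_apply, QuadraticMap.polar]

theorem omegaW_compl_graph (B : (N → F) →ₗ[F] (N → F) →ₗ[F] F) :
    {w | ∀ v ∈ B.graph, omegaW w v = 0} =
      (B.flip.graph : Set ((N → F) × ((N → F) →ₗ[F] F))) := by
  ext w
  simp only [Set.mem_ofPred_eq, SetLike.mem_coe, LinearMap.mem_graph_iff]
  constructor
  · intro h
    ext χ
    exact (sub_eq_zero.1 (h (χ, B χ) rfl)).symm
  · rintro h ⟨χ, _⟩ (rfl : _ = B χ)
    simp [omegaW, h]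

theorem fst_comp_subtype_surjective_of_omegaW_compl_subset
    {L : Submodule F ((N → F) × ((N → F) →ₗ[F] F))}
    (hL : {w | ∀ v ∈ L, omegaW w v = 0} ⊆ (L : Set ((N → F) × ((N → F) →ₗ[F] F))))
    (hinj : Function.Injective (Prod.fst ∘ L.subtype)) :
    Function.Surjective (Prod.fst ∘ L.subtype) := by
  intro φ
  let p := (LinearMap.fst F (N → F) ((N → F) →ₗ[F] F)).comp L.subtype
  obtain ⟨g, hg⟩ := LinearMap.exists_leftInverse_of_injective (V := L) (V' := N → F) p
    (LinearMap.ker_eq_bot.2 hinj)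
  let evalφ : L →ₗ[F] F := (LinearMap.applyₗ φ).comp ((LinearMap.snd F _ _).comp L.subtype)
  refine ⟨⟨(φ, evalφ.comp g), hL fun v hv => ?_⟩, rfl⟩
  have hgv : g v.1 = ⟨v, hv⟩ := LinearMap.congr_fun hg ⟨v, hv⟩
  simp [omegaW, evalφ, hgv]

end

theorem statement13_general {F N : Type*} [Field F] (h2 : (2 : F) ≠ 0) :
    (∀ Q : QuadraticForm F (N → F),
      graphSet Q = {w | ∀ v ∈ graphSet Q, omegaW w v = 0} ∧
        ∀ i : (N → F) →ₗ[F] F, ((0 : N → F), i) ∈ graphSet Q → i = 0) ∧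
      ∀ L : Submodule F ((N → F) × ((N → F) →ₗ[F] F)),
        (L : Set ((N → F) × ((N → F) →ₗ[F] F))) = {w | ∀ v ∈ L, omegaW w v = 0} →
        (∀ i : (N → F) →ₗ[F] F, ((0 : N → F), i) ∈ L → i = 0) →
        ∃! Q : QuadraticForm F (N → F),
          (L : Set ((N → F) × ((N → F) →ₗ[F] F))) = graphSet Q := by
  simp_rw [graphSet_eq_graph, SetLike.mem_coe]
  refine ⟨fun Q => ⟨?_, fun i hi => by simpa using hi⟩, fun L hL hvert => ?_⟩
  · rw [omegaW_compl_graph]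
    congr
    ext x y
    exact QuadraticMap.polar_comm Q x y
  have hinj := L.fst_comp_subtype_injective hvert
  obtain ⟨B, rfl⟩ :=
    L.exists_eq_graph ⟨hinj, fst_comp_subtype_surjective_of_omegaW_compl_subset hL.ge hinj⟩
  have hB : B.flip = B := by
    rw [omegaW_compl_graph] at hL
    exact LinearMap.graph_injective (SetLike.coe_injective hL).symm
  simp_rw [SetLike.coe_set_eq, LinearMap.graph_injective.eq_iff, eq_comm (a := B)]
  exact QuadraticMap.existsUnique_polarBilin_eq (isUnit_iff_ne_zero.2 h2) B hB

/-- Over a field of characteristic `≠ 2`: (a) for every quadratic form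
`Q` on `N → F`, the graph `L_Q` of its differential is a Lagrangian subspace of `W`
(it equals its `ω`-complement) having trivial intersection with `{0} × dual`;
(b) conversely every Lagrangian subspace of `W` with trivial intersection with
`{0} × dual` is `L_Q` for a unique quadratic form `Q`. -/
theorem statement13 {F N : Type*} [Field F] [Fintype N] (h2 : (2 : F) ≠ 0) :
    (∀ Q : QuadraticForm F (N → F),
      graphSet Q = {w | ∀ v ∈ graphSet Q, omegaW w v = 0} ∧
        ∀ i : (N → F) →ₗ[F] F, ((0 : N → F), i) ∈ graphSet Q → i = 0) ∧
      ∀ L : Submodule F ((N → F) × ((N → F) →ₗ[F] F)),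
        (L : Set ((N → F) × ((N → F) →ₗ[F] F))) = {w | ∀ v ∈ L, omegaW w v = 0} →
        (∀ i : (N → F) →ₗ[F] F, ((0 : N → F), i) ∈ L → i = 0) →
        ∃! Q : QuadraticForm F (N → F),
          (L : Set ((N → F) × ((N → F) →ₗ[F] F))) = graphSet Q :=
  statement13_general h2
end

section
/- Let 𝔽 be a field and let (V₁, ω₁), (V₂, ω₂), (V₃, ω₃) be finite-dimensional symplectic vector spaces over 𝔽. Equip V₁ × V₂ with the symplectic form ((u,v),(u',v')) ↦ −ω₁(u,u') + ω₂(v,v'), and similarly V₂ × V₃ and V₁ × V₃. If L ⊆ V₁ × V₂ and L' ⊆ V₂ × V₃ are Lagrangian subspaces, then the composite relation L'∘L = {(u, w) ∈ V₁ × V₃ | there exists v ∈ V₂ with (u,v) ∈ L and (v,w) ∈ L'} is a Lagrangian subspace of V₁ × V₃. -/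
/-!
Put `ω := -ω₁ ⊕ ω₂ ⊕ ω₃` on `V₁ × V₂ × V₃`; it is alternating and nondegenerate, so `M⊥⊥ = M`
for every subspace `M`. Take `M = {(u, v, 0) | (u, v) ∈ L} + {(0, -v, w) | (v, w) ∈ L'}`. A vector
`(a, b, c) ∈ M⊥` has `(a, b) ∈ L° = L` and `(b, c) ∈ L'° = L'`, so `(a, c) ∈ L' ∘ L`. Hence if
`(u, w)` is orthogonal to `L' ∘ L`, then `(u, 0, w) ∈ M⊥⊥ = M`, which says exactly that
`(u, w) ∈ L' ∘ L`. The reverse inclusion `L' ∘ L ⊆ (L' ∘ L)°` is a direct computation.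
-/

open SetRel
open LinearMap (BilinForm)

namespace LinearMap.BilinForm

section Prod

variable {R M₁ M₂ : Type*} [CommRing R] [AddCommGroup M₁] [Module R M₁]
  [AddCommGroup M₂] [Module R M₂] {B₁ : BilinForm R M₁} {B₂ : BilinForm R M₂}

def prod (B₁ : BilinForm R M₁) (B₂ : BilinForm R M₂) : BilinForm R (M₁ × M₂) :=
  B₁.compl₁₂ (.fst R M₁ M₂) (.fst R M₁ M₂) + B₂.compl₁₂ (.snd R M₁ M₂) (.snd R M₁ M₂)

@[simp]
theorem prod_apply (B₁ : BilinForm R M₁) (B₂ : BilinForm R M₂) (x y : M₁ × M₂) :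
    B₁.prod B₂ x y = B₁ x.1 y.1 + B₂ x.2 y.2 :=
  rfl

theorem IsAlt.prod (h₁ : B₁.IsAlt) (h₂ : B₂.IsAlt) : (B₁.prod B₂).IsAlt := fun x => by
  simp [h₁.self_eq_zero, h₂.self_eq_zero]

theorem separatingLeft_neg (h : SeparatingLeft B₁) : SeparatingLeft (-B₁) :=
  fun x hx => h x fun y => neg_eq_zero.mp (hx y)

theorem separatingLeft_prod (h₁ : SeparatingLeft B₁) (h₂ : SeparatingLeft B₂) :
    SeparatingLeft (B₁.prod B₂) := fun x hx =>
  Prod.ext (h₁ _ fun y => by simpa using hx (y, 0)) (h₂ _ fun y => by simpa using hx (0, y))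

end Prod

section Lagrangian

variable {R M : Type*} [CommRing R] [AddCommGroup M] [Module R M]

/-- The complement `S°` of a set; Mathlib's `orthogonal` is the right-handed version, for
submodules. -/
def leftOrthogonal (B : BilinForm R M) (S : Set M) : Set M :=
  {x | ∀ y ∈ S, B x y = 0}

def IsLagrangian (B : BilinForm R M) (S : Set M) : Prop :=
  S = B.leftOrthogonal S

end Lagrangian

section Composition

variable {F V₁ V₂ V₃ : Type*} [Field F]
  [AddCommGroup V₁] [Module F V₁] [AddCommGroup V₂] [Module F V₂] [AddCommGroup V₃] [Module F V₃]
  {ω₁ : BilinForm F V₁} {ω₂ : BilinForm F V₂} {ω₃ : BilinForm F V₃}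
  {L : Submodule F (V₁ × V₂)} {L' : Submodule F (V₂ × V₃)}

theorem comp_subset_leftOrthogonal (hL : (L : Set (V₁ × V₂)) ⊆ ((-ω₁).prod ω₂).leftOrthogonal L)
    (hL' : (L' : Set (V₂ × V₃)) ⊆ ((-ω₂).prod ω₃).leftOrthogonal L') :
    (L : SetRel V₁ V₂) ○ (L' : SetRel V₂ V₃) ⊆
      ((-ω₁).prod ω₃).leftOrthogonal ((L : SetRel V₁ V₂) ○ (L' : SetRel V₂ V₃)) := by
  rintro ⟨u, w⟩ ⟨v, huv, hvw⟩ ⟨u', w'⟩ ⟨v', huv', hvw'⟩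
  have h₁₂ := hL huv (u', v') huv'
  have h₂₃ := hL' hvw (v', w') hvw'
  simp only [prod_apply, BilinForm.neg_apply] at h₁₂ h₂₃ ⊢
  linear_combination h₁₂ + h₂₃

private def inclLeft : (V₁ × V₂) →ₗ[F] V₁ × V₂ × V₃ :=
  LinearMap.prodMap LinearMap.id (LinearMap.inl F V₂ V₃)

/-- `(v, w) ↦ (0, -v, w)`; the sign makes it an isometry from `-ω₂ ⊕ ω₃` to `-ω₁ ⊕ ω₂ ⊕ ω₃`. -/
private def inclRight : (V₂ × V₃) →ₗ[F] V₁ × V₂ × V₃ :=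
  LinearMap.inr F V₁ (V₂ × V₃) ∘ₗ LinearMap.prodMap (-LinearMap.id) LinearMap.id

private theorem mem_comp_of_mem_sup_map {u : V₁} {w : V₃}
    (h : (u, 0, w) ∈ L.map (inclLeft (V₃ := V₃)) ⊔ L'.map (inclRight (V₁ := V₁))) :
    (u, w) ∈ (L : SetRel V₁ V₂) ○ (L' : SetRel V₂ V₃) := by
  obtain ⟨_, ⟨⟨u', v⟩, huv, rfl⟩, _, ⟨⟨v', w'⟩, hvw, rfl⟩, hsum⟩ := Submodule.mem_sup.mp h
  simp only [inclLeft, inclRight, LinearMap.coe_comp, Function.comp_apply, LinearMap.prodMap_apply,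
    LinearMap.id_coe, id_eq, LinearMap.inl_apply, LinearMap.inr_apply, LinearMap.neg_apply,
    Prod.mk_add_mk, add_zero, zero_add, Prod.mk.injEq, add_neg_eq_zero] at hsum
  obtain ⟨rfl, rfl, rfl⟩ := hsum
  exact ⟨v, huv, hvw⟩

private theorem mem_comp_of_mem_orthogonal_sup_map (h₁ : ω₁.IsAlt) (h₂ : ω₂.IsAlt) (h₃ : ω₃.IsAlt)
    (hL : ((-ω₁).prod ω₂).leftOrthogonal L ⊆ L) (hL' : ((-ω₂).prod ω₃).leftOrthogonal L' ⊆ L')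
    {z : V₁ × V₂ × V₃}
    (hz : z ∈ ((-ω₁).prod (ω₂.prod ω₃)).orthogonal (L.map inclLeft ⊔ L'.map inclRight)) :
    (z.1, z.2.2) ∈ (L : SetRel V₁ V₂) ○ (L' : SetRel V₂ V₃) := by
  obtain ⟨a, b, c⟩ := z
  refine ⟨b, hL fun x hx => ?_, hL' fun y hy => ?_⟩
  · rw [(h₁.neg.prod h₂).eq_iff]
    simpa [inclLeft] using hz _ (Submodule.mem_sup_left (Submodule.mem_map_of_mem hx))
  · rw [(h₂.neg.prod h₃).eq_iff]
    simpa [inclRight] using hz _ (Submodule.mem_sup_right (Submodule.mem_map_of_mem hy))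

theorem leftOrthogonal_comp_subset [FiniteDimensional F V₁] [FiniteDimensional F V₂]
    [FiniteDimensional F V₃] (h₁ : ω₁.IsAlt) (h₂ : ω₂.IsAlt) (h₃ : ω₃.IsAlt)
    (s₁ : SeparatingLeft ω₁) (s₂ : SeparatingLeft ω₂) (s₃ : SeparatingLeft ω₃)
    (hL : ((-ω₁).prod ω₂).leftOrthogonal L ⊆ L) (hL' : ((-ω₂).prod ω₃).leftOrthogonal L' ⊆ L') :
    ((-ω₁).prod ω₃).leftOrthogonal ((L : SetRel V₁ V₂) ○ (L' : SetRel V₂ V₃)) ⊆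
      (L : SetRel V₁ V₂) ○ (L' : SetRel V₂ V₃) := by
  rintro ⟨u, w⟩ huw
  set B := (-ω₁).prod (ω₂.prod ω₃)
  have hB : B.IsAlt := h₁.neg.prod (h₂.prod h₃)
  have hBnd : B.Nondegenerate := hB.isRefl.nondegenerate_iff_separatingLeft.mpr
    (separatingLeft_prod (separatingLeft_neg s₁) (separatingLeft_prod s₂ s₃))
  apply mem_comp_of_mem_sup_map
  rw [← B.orthogonal_orthogonal hBnd hB.isRefl (L.map inclLeft ⊔ L'.map inclRight)]
  intro z hz
  rw [hB.eq_iff]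
  simpa [B] using huw _ (mem_comp_of_mem_orthogonal_sup_map h₁ h₂ h₃ hL hL' hz)

theorem IsLagrangian.comp [FiniteDimensional F V₁] [FiniteDimensional F V₂]
    [FiniteDimensional F V₃] (h₁ : ω₁.IsAlt) (h₂ : ω₂.IsAlt) (h₃ : ω₃.IsAlt)
    (s₁ : SeparatingLeft ω₁) (s₂ : SeparatingLeft ω₂) (s₃ : SeparatingLeft ω₃)
    (hL : ((-ω₁).prod ω₂).IsLagrangian L) (hL' : ((-ω₂).prod ω₃).IsLagrangian L') :
    ((-ω₁).prod ω₃).IsLagrangian ((L : SetRel V₁ V₂) ○ (L' : SetRel V₂ V₃)) :=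
  (comp_subset_leftOrthogonal hL.le hL'.le).antisymm
    (leftOrthogonal_comp_subset h₁ h₂ h₃ s₁ s₂ s₃ hL.ge hL'.ge)

end Composition

end LinearMap.BilinForm

/-- The composite of two Lagrangian relations between
finite-dimensional symplectic vector spaces is a Lagrangian relation: the composite
relation equals its complement with respect to the symplectic form
`((u,w),(u',w')) ↦ -ω₁(u,u') + ω₃(w,w')` on `V₁ × V₃` (in particular it is a
Lagrangian subspace). -/
theorem statement14 {F : Type*} [Field F]
    {V₁ V₂ V₃ : Type*}
    [AddCommGroup V₁] [Module F V₁] [FiniteDimensional F V₁]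
    [AddCommGroup V₂] [Module F V₂] [FiniteDimensional F V₂]
    [AddCommGroup V₃] [Module F V₃] [FiniteDimensional F V₃]
    (ω₁ : V₁ →ₗ[F] V₁ →ₗ[F] F) (h₁alt : ∀ v, ω₁ v v = 0)
    (h₁nd : ∀ u, (∀ v, ω₁ u v = 0) → u = 0)
    (ω₂ : V₂ →ₗ[F] V₂ →ₗ[F] F) (h₂alt : ∀ v, ω₂ v v = 0)
    (h₂nd : ∀ u, (∀ v, ω₂ u v = 0) → u = 0)
    (ω₃ : V₃ →ₗ[F] V₃ →ₗ[F] F) (h₃alt : ∀ v, ω₃ v v = 0)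
    (h₃nd : ∀ u, (∀ v, ω₃ u v = 0) → u = 0)
    (L : Submodule F (V₁ × V₂)) (L' : Submodule F (V₂ × V₃))
    (hL : (L : Set (V₁ × V₂)) =
      {p | ∀ q ∈ L, -ω₁ p.1 q.1 + ω₂ p.2 q.2 = 0})
    (hL' : (L' : Set (V₂ × V₃)) =
      {p | ∀ q ∈ L', -ω₂ p.1 q.1 + ω₃ p.2 q.2 = 0}) :
    {p : V₁ × V₃ | ∃ v : V₂, (p.1, v) ∈ L ∧ (v, p.2) ∈ L'} =
      {p : V₁ × V₃ | ∀ q : V₁ × V₃,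
        (∃ v : V₂, (q.1, v) ∈ L ∧ (v, q.2) ∈ L') →
          -ω₁ p.1 q.1 + ω₃ p.2 q.2 = 0} :=
  LinearMap.BilinForm.IsLagrangian.comp h₁alt h₂alt h₃alt h₁nd h₂nd h₃nd hL hL'
end

section
/- Let (V, ω) be a finite-dimensional symplectic vector space over a field 𝔽, let L ⊆ V be a Lagrangian subspace, and let S ⊆ V be an isotropic subspace. Then the subspace (L ∩ S°) + S is a Lagrangian subspace of V. -/
/-!
Since `L = L°`, we have `L ∩ S° = (L + S)°`, and since `S ⊆ S°` the modular law gives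
`(L ∩ S°) + S = (L + S) ∩ S°`. Hence, as `W°° = W` for a nondegenerate reflexive form in
finite dimension,
`((L ∩ S°) + S)° = (L ∩ S°)° ∩ S° = (L + S)°° ∩ S° = (L + S) ∩ S° = (L ∩ S°) + S`.
-/

/-- The `ω`-complement `T° = {v | ∀ t ∈ T, ω v t = 0}` of a set `T`, as a submodule. -/
def omegaCompl {F V : Type*} [Field F] [AddCommGroup V] [Module F V]
    (ω : V →ₗ[F] V →ₗ[F] F) (T : Set V) : Submodule F V where
  carrier := {v | ∀ x ∈ T, ω v x = 0}
  add_mem' := by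
    intro a b ha hb x hx
    simp [ha x hx, hb x hx]
  zero_mem' := by
    intro x hx
    simp
  smul_mem' := by
    intro c a ha x hx
    simp [ha x hx]

namespace LinearMap.BilinForm

theorem orthogonal_sup {R M : Type*} [CommRing R] [AddCommGroup M] [Module R M]
    (B : LinearMap.BilinForm R M) (A C : Submodule R M) :
    B.orthogonal (A ⊔ C) = B.orthogonal A ⊓ B.orthogonal C := by
  refine le_antisymm (le_inf (orthogonal_le le_sup_left) (orthogonal_le le_sup_right)) ?_
  rintro v ⟨hA, hC⟩ w hw
  obtain ⟨a, ha, c, hc, rfl⟩ := Submodule.mem_sup.1 hw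
  rw [map_add, LinearMap.add_apply, hA a ha, hC c hc, add_zero]

theorem orthogonal_inf_orthogonal_sup_eq_self {K V : Type*} [Field K] [AddCommGroup V]
    [Module K V] [FiniteDimensional K V] {B : LinearMap.BilinForm K V} (hB : B.Nondegenerate)
    (hB₀ : B.IsRefl) {L S : Submodule K V} (hL : B.orthogonal L = L)
    (hS : S ≤ B.orthogonal S) :
    B.orthogonal (L ⊓ B.orthogonal S ⊔ S) = L ⊓ B.orthogonal S ⊔ S := by
  have hLS : L ⊓ B.orthogonal S = B.orthogonal (L ⊔ S) := by rw [orthogonal_sup, hL]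
  calc B.orthogonal (L ⊓ B.orthogonal S ⊔ S)
      = B.orthogonal (B.orthogonal (L ⊔ S)) ⊓ B.orthogonal S := by rw [orthogonal_sup, hLS]
    _ = (L ⊔ S) ⊓ B.orthogonal S := by rw [orthogonal_orthogonal hB hB₀]
    _ = L ⊓ B.orthogonal S ⊔ S := by
      rw [sup_comm, sup_inf_assoc_of_le L hS, sup_comm, inf_comm]

end LinearMap.BilinForm

theorem omegaCompl_eq_orthogonal {F V : Type*} [Field F] [AddCommGroup V] [Module F V]
    {ω : V →ₗ[F] V →ₗ[F] F} (hω : ω.IsRefl) (T : Submodule F V) :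
    omegaCompl ω (T : Set V) = LinearMap.BilinForm.orthogonal ω T :=
  Submodule.ext fun v => ⟨fun hv w hw => hω v w (hv w hw), fun hv w hw => hω w v (hv w hw)⟩

/-- In a finite-dimensional symplectic vector space `(V, ω)`, if `L` is
a Lagrangian subspace and `S` is an isotropic subspace, then `(L ∩ S°) + S` is a
Lagrangian subspace. -/
theorem statement15 {F V : Type*} [Field F] [AddCommGroup V] [Module F V]
    [FiniteDimensional F V]
    (ω : V →ₗ[F] V →ₗ[F] F)
    (halt : ∀ v, ω v v = 0)
    (hnd : ∀ u, (∀ v, ω u v = 0) → u = 0)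
    (L S : Submodule F V)
    (hL : (L : Set V) = (omegaCompl ω (L : Set V) : Set V))
    (hS : (S : Set V) ⊆ (omegaCompl ω (S : Set V) : Set V)) :
    (((L ⊓ omegaCompl ω (S : Set V)) ⊔ S : Submodule F V) : Set V) =
      (omegaCompl ω (((L ⊓ omegaCompl ω (S : Set V)) ⊔ S : Submodule F V) : Set V) :
        Set V) := by
  have hrefl : ω.IsRefl := LinearMap.IsAlt.isRefl halt
  have hnondeg : LinearMap.BilinForm.Nondegenerate ω :=
    hrefl.nondegenerate_iff_separatingLeft.2 hnd
  rw [SetLike.coe_set_eq] at hL ⊢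
  simp only [omegaCompl_eq_orthogonal hrefl] at hL hS ⊢
  exact (LinearMap.BilinForm.orthogonal_inf_orthogonal_sup_eq_self hnondeg hrefl hL.symm
    hS).symm
end

section
/- Let 𝔽 be a field, X, Y, Z finite sets, α a corelation from X to Y, and β a corelation from Y to Z. Then for all φ_X : X → 𝔽 and φ_Z : Z → 𝔽, the function [φ_X, φ_Z] : X + Z → 𝔽 is constant on each equivalence class of the composite corelation β∘α if and only if there exists φ_Y : Y → 𝔽 such that [φ_X, φ_Y] : X + Y → 𝔽 is constant on each equivalence class of α and [φ_Y, φ_Z] : Y + Z → 𝔽 is constant on each equivalence class of β. (This is the compositionality of the potential functor Φ: Φ(β∘α) = Φ(β)∘Φ(α) as linear relations.) -/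
/-!
Both sides say that `X ⊕ Y ⊕ Z` carries a potential `ψ` that is constant along the generating
relation of the composite and restricts to `[φ_X, φ_Z]` on `X ⊕ Z`. Such a `ψ` is the same thing
as a function on the quotient by the generated equivalence relation; it exists iff `[φ_X, φ_Z]`
is constant on the traces of the classes on `X ⊕ Z`, i.e. on the classes of `β ∘ α`. Off those
traces `ψ` may take any value.
-/

/-- The composite of a corelation `α` from `X` to `Y` (an equivalence relation on
`X ⊕ Y`) and a corelation `β` from `Y` to `Z`: take the smallest equivalence relation on
`X ⊕ Y ⊕ Z` containing the images of `α` and `β`, and restrict it to `X ⊕ Z`. -/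
def corelComp {X Y Z : Type*} (α : X ⊕ Y → X ⊕ Y → Prop) (β : Y ⊕ Z → Y ⊕ Z → Prop) :
    X ⊕ Z → X ⊕ Z → Prop := fun a b =>
  Relation.EqvGen
    (fun u v : X ⊕ (Y ⊕ Z) =>
      (∃ p q : X ⊕ Y, α p q ∧ u = Sum.map id Sum.inl p ∧ v = Sum.map id Sum.inl q) ∨
      (∃ p q : Y ⊕ Z, β p q ∧ u = Sum.inr p ∧ v = Sum.inr q))
    (Sum.map id Sum.inr a) (Sum.map id Sum.inr b)

open Relation

theorem Relation.exists_invariant_comp_eq_iff {α β γ : Type*} [Nonempty γ]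
    (r : β → β → Prop) (f : α → β) (g : α → γ) :
    (∀ a b, EqvGen r (f a) (f b) → g a = g b) ↔
      ∃ ψ : β → γ, (∀ u v, r u v → ψ u = ψ v) ∧ ψ ∘ f = g := by
  classical
  constructor
  · intro hg
    let q : Quot r → γ := fun c =>
      if h : ∃ a, Quot.mk r (f a) = c then g h.choose else Classical.arbitrary γ
    refine ⟨q ∘ Quot.mk r, fun u v huv => congrArg q (Quot.sound huv), funext fun a => ?_⟩
    have h : ∃ a', Quot.mk r (f a') = Quot.mk r (f a) := ⟨a, rfl⟩
    simp only [Function.comp_apply, q, dif_pos h]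
    exact hg _ _ (Quot.eqvGen_exact h.choose_spec)
  · rintro ⟨ψ, hψ, rfl⟩ a b hab
    exact congrArg (Quot.lift ψ hψ) (Quot.eqvGen_sound hab)

section Corelation

variable {X Y Z : Type*}

def corelGen (α : X ⊕ Y → X ⊕ Y → Prop) (β : Y ⊕ Z → Y ⊕ Z → Prop) :
    X ⊕ (Y ⊕ Z) → X ⊕ (Y ⊕ Z) → Prop := fun u v =>
  (∃ p q : X ⊕ Y, α p q ∧ u = Sum.map id Sum.inl p ∧ v = Sum.map id Sum.inl q) ∨
    (∃ p q : Y ⊕ Z, β p q ∧ u = Sum.inr p ∧ v = Sum.inr q)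

theorem corelComp_iff (α : X ⊕ Y → X ⊕ Y → Prop) (β : Y ⊕ Z → Y ⊕ Z → Prop) (a b : X ⊕ Z) :
    corelComp α β a b ↔
      EqvGen (corelGen α β) (Sum.map id Sum.inr a) (Sum.map id Sum.inr b) :=
  Iff.rfl

theorem sumElim_invariant_corelGen_iff {F : Type*}
    (α : X ⊕ Y → X ⊕ Y → Prop) (β : Y ⊕ Z → Y ⊕ Z → Prop)
    (φX : X → F) (φY : Y → F) (φZ : Z → F) :
    (∀ u v, corelGen α β u v →
        Sum.elim φX (Sum.elim φY φZ) u = Sum.elim φX (Sum.elim φY φZ) v) ↔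
      (∀ p q : X ⊕ Y, α p q → Sum.elim φX φY p = Sum.elim φX φY q) ∧
        (∀ p q : Y ⊕ Z, β p q → Sum.elim φY φZ p = Sum.elim φY φZ q) := by
  have hrestr : ∀ p : X ⊕ Y,
      Sum.elim φX (Sum.elim φY φZ) (Sum.map id Sum.inl p) = Sum.elim φX φY p := by
    rintro (_ | _) <;> rfl
  constructor
  · intro h
    refine ⟨fun p q hpq => ?_, fun p q hpq => h _ _ (Or.inr ⟨p, q, hpq, rfl, rfl⟩)⟩
    rw [← hrestr, ← hrestr]
    exact h _ _ (Or.inl ⟨p, q, hpq, rfl, rfl⟩)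
  · rintro ⟨hα, hβ⟩ u v (⟨p, q, hpq, rfl, rfl⟩ | ⟨p, q, hpq, rfl, rfl⟩)
    · rw [hrestr, hrestr]
      exact hα p q hpq
    · exact hβ p q hpq

theorem exists_comp_map_inr_eq_iff {F : Type*} (P : (X ⊕ (Y ⊕ Z) → F) → Prop)
    (φX : X → F) (φZ : Z → F) :
    (∃ ψ, P ψ ∧ ψ ∘ Sum.map id Sum.inr = Sum.elim φX φZ) ↔
      ∃ φY : Y → F, P (Sum.elim φX (Sum.elim φY φZ)) := by
  constructor
  · rintro ⟨ψ, hP, hψ⟩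
    refine ⟨ψ ∘ Sum.inr ∘ Sum.inl, ?_⟩
    convert hP using 1
    funext u
    rcases u with x | y | z
    · exact (congrFun hψ (Sum.inl x)).symm
    · rfl
    · exact (congrFun hψ (Sum.inr z)).symm
  · rintro ⟨φY, hP⟩
    exact ⟨_, hP, funext fun w => by rcases w with _ | _ <;> rfl⟩

end Corelation

theorem statement17_general {F : Type*} [Field F] {X Y Z : Type*}
    (α : X ⊕ Y → X ⊕ Y → Prop)
    (β : Y ⊕ Z → Y ⊕ Z → Prop)
    (φX : X → F) (φZ : Z → F) :
    (∀ a b : X ⊕ Z, corelComp α β a b → Sum.elim φX φZ a = Sum.elim φX φZ b) ↔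
      ∃ φY : Y → F,
        (∀ p q : X ⊕ Y, α p q → Sum.elim φX φY p = Sum.elim φX φY q) ∧
        (∀ p q : Y ⊕ Z, β p q → Sum.elim φY φZ p = Sum.elim φY φZ q) := by
  simp only [corelComp_iff]
  rw [exists_invariant_comp_eq_iff, exists_comp_map_inr_eq_iff]
  exact exists_congr fun φY => sumElim_invariant_corelGen_iff α β φX φY φZ

/-- Compositionality of the potential functor `Φ`: the pair
`(φ_X, φ_Z)` is constant on each equivalence class of the composite corelation `β∘α` if
and only if there is `φ_Y` making `(φ_X, φ_Y)` constant on classes of `α` and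
`(φ_Y, φ_Z)` constant on classes of `β`. -/
theorem statement17 {F : Type*} [Field F] {X Y Z : Type*}
    [Fintype X] [Fintype Y] [Fintype Z]
    (α : X ⊕ Y → X ⊕ Y → Prop) (hα : Equivalence α)
    (β : Y ⊕ Z → Y ⊕ Z → Prop) (hβ : Equivalence β)
    (φX : X → F) (φZ : Z → F) :
    (∀ a b : X ⊕ Z, corelComp α β a b → Sum.elim φX φZ a = Sum.elim φX φZ b) ↔
      ∃ φY : Y → F,
        (∀ p q : X ⊕ Y, α p q → Sum.elim φX φY p = Sum.elim φX φY q) ∧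
        (∀ p q : Y ⊕ Z, β p q → Sum.elim φY φZ p = Sum.elim φY φZ q) :=
  statement17_general α β φX φZ
end

section
/- Let 𝔽 be a field, X, Y, Z finite sets, α a corelation from X to Y, and β a corelation from Y to Z. Then for all i_X : X → 𝔽 and i_Z : Z → 𝔽, the following are equivalent: (1) for every equivalence class C of the composite corelation β∘α, ∑_{x ∈ C∩X} i_X(x) = ∑_{z ∈ C∩Z} i_Z(z); (2) there exists i_Y : Y → 𝔽 such that for every equivalence class A of α, ∑_{x ∈ A∩X} i_X(x) = ∑_{y ∈ A∩Y} i_Y(y), and for every equivalence class B of β, ∑_{y ∈ B∩Y} i_Y(y) = ∑_{z ∈ B∩Z} i_Z(z). (This is the compositionality of the current functor I: I(β∘α) = I(β)∘I(α) as linear relations.) -/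
/-!
For (2) ⇒ (1): the class of `∼` through a point of `X + Z` is a union of classes of `α` and also
a union of classes of `β`, so summing the balance equations of `α` over it equates the `X`-sum
with the `Y`-sum of `i_Y`, and those of `β` equate the `Y`-sum with the `Z`-sum.

For (1) ⇒ (2): the conditions on `i_Y` form a linear system, which by the Fredholm alternative is
solvable as soon as every linear relation `u` between its rows annihilates its right-hand side.
Such a `u` gives weights `U` on `X + Y`, constant on `α`-classes, and `V` on `Y + Z`, constant on
`β`-classes, with `U = -V` on `Y`. Glued together they form a function constant on the classes
of `∼`, and pairing it with `(i_X, -i_Z)` gives zero by (1).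
-/

open Finset

open scoped Classical

open Matrix

theorem Matrix.exists_mulVec_eq_of_forall_vecMul_eq_zero {K m n : Type*} [Field K] [Fintype m]
    [Fintype n] (M : Matrix m n K) (c : m → K) (h : ∀ u, u ᵥ* M = 0 → u ⬝ᵥ c = 0) :
    ∃ v, M *ᵥ v = c := by
  by_contra hc
  have hc' : c ∉ LinearMap.range M.mulVecLin := by simpa using hc
  obtain ⟨f, hfc, hf⟩ := Submodule.exists_dual_map_eq_bot_of_notMem hc' inferInstance
  have hf_dot : ∀ x, f x = (fun i => f (Pi.single i 1)) ⬝ᵥ x := fun x => by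
    conv_lhs => rw [pi_eq_sum_univ' x]
    simp [dotProduct, mul_comm]
  refine hfc ?_
  rw [hf_dot]
  refine h _ (funext fun j => ?_)
  have hj : f (M *ᵥ Pi.single j 1) = 0 := (Submodule.eq_bot_iff _).1 hf _
    (Submodule.mem_map_of_mem (LinearMap.mem_range_self M.mulVecLin (Pi.single j 1)))
  rwa [hf_dot, dotProduct_mulVec, dotProduct_single_one] at hj

noncomputable def Matrix.ofRel {ι κ R : Type*} [Zero R] [One R] (r : ι → κ → Prop) :
    Matrix ι κ R :=
  Matrix.of fun i j => if r i j then 1 else 0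

theorem Matrix.ofRel_mulVec {ι κ R : Type*} [Fintype κ] [NonAssocSemiring R] (r : ι → κ → Prop)
    (v : κ → R) (i : ι) : (ofRel r *ᵥ v) i = ∑ j ∈ univ.filter (r i), v j := by
  simp [ofRel, mulVec, dotProduct, sum_filter]

theorem Matrix.vecMul_ofRel_eq_of_equivalence {ι R : Type*} [Fintype ι] [NonAssocSemiring R]
    {r : ι → ι → Prop} (hr : Equivalence r) (u : ι → R) {p q : ι} (hpq : r p q) :
    (u ᵥ* ofRel r) p = (u ᵥ* ofRel r) q := by
  have hiff : ∀ i, r i p ↔ r i q := fun i => ⟨(hr.trans · hpq), (hr.trans · (hr.symm hpq))⟩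
  simp [ofRel, vecMul, dotProduct, hiff]

section Balanced

variable {P ι κ F : Type*} [Fintype ι] [Fintype κ]

def IsBalanced [AddCommMonoid F] (r : P → P → Prop) (a : ι → P) (b : κ → P) (f : ι → F)
    (g : κ → F) : Prop :=
  ∀ p, ∑ i ∈ univ.filter (fun i => r p (a i)), f i = ∑ k ∈ univ.filter (fun k => r p (b k)), g k

theorem sum_mul_eq_sum_quotient [Fintype P] [NonUnitalNonAssocSemiring F] {r : P → P → Prop}
    (hr : Equivalence r) {c : P → F} (hc : ∀ p q, r p q → c p = c q) (a : ι → P) (f : ι → F) :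
    ∑ i, c (a i) * f i = ∑ q : Quotient ⟨r, hr⟩,
      c q.out * ∑ i ∈ univ.filter (fun i => r q.out (a i)), f i := by
  rw [← sum_fiberwise univ (fun i => (⟦a i⟧ : Quotient ⟨r, hr⟩))]
  refine sum_congr rfl fun q _ => ?_
  rw [mul_sum]
  refine sum_congr (filter_congr fun i _ => ?_) fun i hi => ?_
  · exact Quotient.mk_eq_iff_out.trans ⟨hr.symm, hr.symm⟩
  · rw [hc _ _ (hr.symm (mem_filter.1 hi).2)]

theorem IsBalanced.sum_mul_eq [Fintype P] [NonUnitalNonAssocSemiring F] {r : P → P → Prop}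
    (hr : Equivalence r) {a : ι → P} {b : κ → P} {f : ι → F} {g : κ → F}
    (h : IsBalanced r a b f g) {c : P → F} (hc : ∀ p q, r p q → c p = c q) :
    ∑ i, c (a i) * f i = ∑ k, c (b k) * g k := by
  rw [sum_mul_eq_sum_quotient hr hc a f, sum_mul_eq_sum_quotient hr hc b g]
  exact sum_congr rfl fun q _ => by rw [h]

end Balanced

section Corelation

variable {X Y Z : Type*} (α : X ⊕ Y → X ⊕ Y → Prop) (β : Y ⊕ Z → Y ⊕ Z → Prop)

/-- The relation `∼` on `X ⊕ Y ⊕ Z` in the definition of `corelComp`. -/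
def corelJoin : X ⊕ (Y ⊕ Z) → X ⊕ (Y ⊕ Z) → Prop :=
  Relation.EqvGen fun u v =>
    (∃ p q : X ⊕ Y, α p q ∧ u = Sum.map id Sum.inl p ∧ v = Sum.map id Sum.inl q) ∨
    (∃ p q : Y ⊕ Z, β p q ∧ u = Sum.inr p ∧ v = Sum.inr q)

theorem corelComp_iff_corelJoin {a b : X ⊕ Z} :
    corelComp α β a b ↔ corelJoin α β (Sum.map id Sum.inr a) (Sum.map id Sum.inr b) := Iff.rfl

theorem corelJoin_equivalence : Equivalence (corelJoin α β) :=
  Relation.EqvGen.is_equivalence _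

theorem corelComp_equivalence : Equivalence (corelComp α β) :=
  (corelJoin_equivalence α β).comap _

variable {α β}

theorem corelJoin_of_left {p q : X ⊕ Y} (h : α p q) :
    corelJoin α β (Sum.map id Sum.inl p) (Sum.map id Sum.inl q) :=
  .rel _ _ (.inl ⟨p, q, h, rfl, rfl⟩)

theorem corelJoin_of_right {p q : Y ⊕ Z} (h : β p q) : corelJoin α β (Sum.inr p) (Sum.inr q) :=
  .rel _ _ (.inr ⟨p, q, h, rfl, rfl⟩)

theorem apply_eq_of_corelJoin {γ : Type*} {φ : X ⊕ (Y ⊕ Z) → γ}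
    (hα : ∀ p q, α p q → φ (Sum.map id Sum.inl p) = φ (Sum.map id Sum.inl q))
    (hβ : ∀ p q, β p q → φ (Sum.inr p) = φ (Sum.inr q)) {u v : X ⊕ (Y ⊕ Z)}
    (h : corelJoin α β u v) : φ u = φ v := by
  refine ((Setoid.ker φ).iseqv.eqvGen_iff).1 (h.mono fun u v huv => ?_)
  rcases huv with ⟨p, q, hpq, rfl, rfl⟩ | ⟨p, q, hpq, rfl, rfl⟩
  exacts [hα p q hpq, hβ p q hpq]

end Corelation

section Currents

variable {F X Y Z : Type*} [Fintype X] [Fintype Z]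
  {α : X ⊕ Y → X ⊕ Y → Prop} {β : Y ⊕ Z → Y ⊕ Z → Prop}

theorem isBalanced_corelComp [Fintype Y] [NonAssocSemiring F] (hα : Equivalence α)
    (hβ : Equivalence β) {iX : X → F} {iY : Y → F} {iZ : Z → F}
    (hαY : IsBalanced α Sum.inl Sum.inr iX iY) (hβY : IsBalanced β Sum.inl Sum.inr iY iZ) :
    IsBalanced (corelComp α β) Sum.inl Sum.inr iX iZ := by
  intro w
  have hJ := corelJoin_equivalence α β
  let χ : X ⊕ (Y ⊕ Z) → F := fun t => if corelJoin α β (Sum.map id Sum.inr w) t then 1 else 0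
  have hχ : ∀ s t, corelJoin α β s t → χ s = χ t := fun s t hst =>
    if_congr ⟨(hJ.trans · hst), (hJ.trans · (hJ.symm hst))⟩ rfl rfl
  have hXY := hαY.sum_mul_eq hα (c := χ ∘ Sum.map id Sum.inl)
    fun p q hpq => hχ _ _ (corelJoin_of_left hpq)
  have hYZ := hβY.sum_mul_eq hβ (c := χ ∘ Sum.inr)
    fun p q hpq => hχ _ _ (corelJoin_of_right hpq)
  simp only [Function.comp_apply, χ, boole_mul, ← sum_filter] at hXY hYZ
  exact hXY.trans hYZ

theorem IsBalanced.sum_mul_add_sum_mul_eq_zero [Ring F] {iX : X → F} {iZ : Z → F}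
    (h : IsBalanced (corelComp α β) Sum.inl Sum.inr iX iZ) {U : X ⊕ Y → F} {V : Y ⊕ Z → F}
    (hU : ∀ p q, α p q → U p = U q) (hV : ∀ p q, β p q → V p = V q)
    (hUV : ∀ y, U (Sum.inr y) + V (Sum.inl y) = 0) :
    ∑ x, U (Sum.inl x) * iX x + ∑ z, V (Sum.inr z) * iZ z = 0 := by
  let φ : X ⊕ (Y ⊕ Z) → F := Sum.elim (U ∘ Sum.inl) (-V)
  have hφU : ∀ p, φ (Sum.map id Sum.inl p) = U p := by
    rintro (x | y)
    · rfl
    · exact (eq_neg_of_add_eq_zero_left (hUV y)).symm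
  have hφ : ∀ a b, corelComp α β a b → φ (Sum.map id Sum.inr a) = φ (Sum.map id Sum.inr b) :=
    fun a b hab => apply_eq_of_corelJoin (φ := φ)
      (fun p q hpq => by rw [hφU, hφU, hU p q hpq])
      (fun p q hpq => congrArg Neg.neg (hV p q hpq))
      ((corelComp_iff_corelJoin α β).1 hab)
  have hXZ : ∑ x, U (Sum.inl x) * iX x = ∑ z, -V (Sum.inr z) * iZ z :=
    h.sum_mul_eq (corelComp_equivalence α β) hφ
  simp [hXZ, sum_neg_distrib]

theorem exists_isBalanced_of_isBalanced_corelComp [Fintype Y] [Field F] (hα : Equivalence α)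
    (hβ : Equivalence β) {iX : X → F} {iZ : Z → F}
    (h : IsBalanced (corelComp α β) Sum.inl Sum.inr iX iZ) :
    ∃ iY : Y → F, IsBalanced α Sum.inl Sum.inr iX iY ∧ IsBalanced β Sum.inl Sum.inr iY iZ := by
  obtain ⟨iY, hiY⟩ : ∃ iY,
      fromRows (ofRel fun w y => α w (Sum.inr y)) (ofRel fun w y => β w (Sum.inl y)) *ᵥ iY =
        Sum.elim (ofRel (fun w x => α w (Sum.inl x)) *ᵥ iX)
          (ofRel (fun w z => β w (Sum.inr z)) *ᵥ iZ) := by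
    refine exists_mulVec_eq_of_forall_vecMul_eq_zero _ _ fun u hu => ?_
    rw [vecMul_fromRows] at hu
    rw [← Sum.elim_comp_inl_inr u, sumElim_dotProduct_sumElim, dotProduct_mulVec,
      dotProduct_mulVec]
    exact h.sum_mul_add_sum_mul_eq_zero (fun _ _ => vecMul_ofRel_eq_of_equivalence hα _)
      (fun _ _ => vecMul_ofRel_eq_of_equivalence hβ _) (congrFun hu)
  rw [fromRows_mulVec] at hiY
  refine ⟨iY, fun w => ?_, fun w => ?_⟩
  · simpa only [Sum.elim_inl, ofRel_mulVec] using (congrFun hiY (Sum.inl w)).symm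
  · simpa only [Sum.elim_inr, ofRel_mulVec] using congrFun hiY (Sum.inr w)

end Currents

/-- Compositionality of the current functor `I`: the currents
`(i_X, i_Z)` are balanced on each equivalence class of the composite corelation `β∘α`
(the sum over the `X`-part of each class equals the sum over its `Z`-part) if and only
if there exists `i_Y` balanced with `i_X` on each class of `α` and with `i_Z` on each
class of `β`. -/
theorem statement18 {F : Type*} [Field F] {X Y Z : Type*}
    [Fintype X] [Fintype Y] [Fintype Z]
    (α : X ⊕ Y → X ⊕ Y → Prop) (hα : Equivalence α)
    (β : Y ⊕ Z → Y ⊕ Z → Prop) (hβ : Equivalence β)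
    (iX : X → F) (iZ : Z → F) :
    (∀ w : X ⊕ Z,
        ∑ x ∈ univ.filter (fun x => corelComp α β w (Sum.inl x)), iX x =
          ∑ z ∈ univ.filter (fun z => corelComp α β w (Sum.inr z)), iZ z) ↔
      ∃ iY : Y → F,
        (∀ w : X ⊕ Y,
          ∑ x ∈ univ.filter (fun x => α w (Sum.inl x)), iX x =
            ∑ y ∈ univ.filter (fun y => α w (Sum.inr y)), iY y) ∧
        ∀ w : Y ⊕ Z,
          ∑ y ∈ univ.filter (fun y => β w (Sum.inl y)), iY y =
            ∑ z ∈ univ.filter (fun z => β w (Sum.inr z)), iZ z :=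
  ⟨exists_isBalanced_of_isBalanced_corelComp hα hβ,
    fun ⟨_, hαY, hβY⟩ => isBalanced_corelComp hα hβ hαY hβY⟩
end

section
/- Let 𝔽 be a field, X and Y finite sets, and α a corelation from X to Y. On the vector space W = (X → 𝔽) × (X → 𝔽) × (Y → 𝔽) × (Y → 𝔽) define the bilinear form ω((φ_X, i_X, φ_Y, i_Y), (φ'_X, i'_X, φ'_Y, i'_Y)) = −(⟨i'_X, φ_X⟩ − ⟨i_X, φ'_X⟩) + (⟨i'_Y, φ_Y⟩ − ⟨i_Y, φ'_Y⟩), where ⟨i, φ⟩ = ∑ i(x)·φ(x). Let S(α) ⊆ W be the subspace of all (φ_X, i_X, φ_Y, i_Y) such that the function [φ_X, φ_Y] : X + Y → 𝔽 is constant on each equivalence class of α, and for each equivalence class A of α, ∑_{x ∈ A∩X} i_X(x) = ∑_{y ∈ A∩Y} i_Y(y). Then S(α) is a Lagrangian subspace of (W, ω); that is, S(α) equals its ω-complement {w ∈ W | ω(w, v) = 0 for all v ∈ S(α)}. -/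
open Finset

open scoped Classical

/-- The pairing `⟨i, φ⟩ = ∑ x, i x * φ x` between currents and potentials. -/
def pairing {F X : Type*} [Field F] [Fintype X] (i φ : X → F) : F :=
  ∑ x, i x * φ x

/-- The symplectic form on `(X → F) × (X → F) × (Y → F) × (Y → F)`:
`ω((φX,iX,φY,iY),(φX',iX',φY',iY')) = -(⟨iX',φX⟩-⟨iX,φX'⟩) + (⟨iY',φY⟩-⟨iY,φY'⟩)`. -/
def omegaS {F X Y : Type*} [Field F] [Fintype X] [Fintype Y]
    (p q : (X → F) × (X → F) × (Y → F) × (Y → F)) : F :=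
  -(pairing q.2.1 p.1 - pairing p.2.1 q.1) +
    (pairing q.2.2.2 p.2.2.1 - pairing p.2.2.2 q.2.2.1)

/-- The subspace `S(α)` determined by a corelation `α` from `X` to `Y`: all
`(φX, iX, φY, iY)` such that `[φX, φY]` is constant on each equivalence class of `α`,
and for each equivalence class the sum of the `X`-currents equals the sum of the
`Y`-currents. -/
def corelSubspace {F X Y : Type*} [Field F] [Fintype X] [Fintype Y]
    (α : X ⊕ Y → X ⊕ Y → Prop) :
    Set ((X → F) × (X → F) × (Y → F) × (Y → F)) :=
  {p | (∀ u v : X ⊕ Y, α u v → Sum.elim p.1 p.2.2.1 u = Sum.elim p.1 p.2.2.1 v) ∧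
    ∀ w : X ⊕ Y,
      ∑ x ∈ univ.filter (fun x => α w (Sum.inl x)), p.2.1 x =
        ∑ y ∈ univ.filter (fun y => α w (Sum.inr y)), p.2.2.2 y}

section Aux

variable {F X Y : Type*} [Field F] [Fintype X] [Fintype Y]

/-- Signed current of a vector, as a function on `X ⊕ Y`. -/
def sCur (p : (X → F) × (X → F) × (Y → F) × (Y → F)) : X ⊕ Y → F :=
  Sum.elim p.2.1 fun y => -p.2.2.2 y

/-- Potential of a vector, as a function on `X ⊕ Y`. -/
def pot (p : (X → F) × (X → F) × (Y → F) × (Y → F)) : X ⊕ Y → F :=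
  Sum.elim p.1 p.2.2.1

lemma omegaS_eq (p q : (X → F) × (X → F) × (Y → F) × (Y → F)) :
    omegaS p q = (∑ u, sCur p u * pot q u) - ∑ u, sCur q u * pot p u := by
  simp [omegaS, pairing, sCur, pot, Fintype.sum_sum_type, Finset.sum_neg_distrib]
  ring

lemma mem_corelSubspace_iff (α : X ⊕ Y → X ⊕ Y → Prop)
    (p : (X → F) × (X → F) × (Y → F) × (Y → F)) :
    p ∈ corelSubspace (F := F) α ↔
      (∀ u v : X ⊕ Y, α u v → pot p u = pot p v) ∧
        ∀ w : X ⊕ Y, ∑ u ∈ univ.filter (fun u => α w u), sCur p u = 0 := by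
  have h : ∀ w : X ⊕ Y, (∑ u ∈ univ.filter (fun u => α w u), sCur p u =
      (∑ x ∈ univ.filter (fun x => α w (Sum.inl x)), p.2.1 x) -
        ∑ y ∈ univ.filter (fun y => α w (Sum.inr y)), p.2.2.2 y) := by
    intro w
    rw [Finset.sum_filter, Fintype.sum_sum_type]
    simp only [sCur, Sum.elim_inl, Sum.elim_inr]
    rw [Finset.sum_filter, Finset.sum_filter, sub_eq_add_neg, ← Finset.sum_neg_distrib]
    congr 1
    exact Finset.sum_congr rfl fun y _ => by split <;> simp
  constructor
  · rintro ⟨h1, h2⟩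
    exact ⟨h1, fun w => by rw [h w, h2 w, sub_self]⟩
  · rintro ⟨h1, h2⟩
    refine ⟨h1, fun w => ?_⟩
    have := h2 w
    rw [h w, sub_eq_zero] at this
    exact this

end Aux

/-- For any corelation `α` from a finite set `X` to a finite set `Y`,
the subspace `S(α)` is a Lagrangian subspace of
`(X → F) × (X → F) × (Y → F) × (Y → F)`: it equals its `ω`-complement. -/
theorem statement19 {F : Type*} [Field F] {X Y : Type*} [Fintype X] [Fintype Y]
    (α : X ⊕ Y → X ⊕ Y → Prop) (hα : Equivalence α) :
    corelSubspace (F := F) α =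
      {w | ∀ v ∈ corelSubspace (F := F) α, omegaS w v = 0} := by
  -- key: if p satisfies the current condition and q the potential condition,
  -- then ∑ u, sCur p u * pot q u = 0
  have key : ∀ p q : (X → F) × (X → F) × (Y → F) × (Y → F),
      (∀ w : X ⊕ Y, ∑ u ∈ univ.filter (fun u => α w u), sCur p u = 0) →
      (∀ u v : X ⊕ Y, α u v → pot q u = pot q v) →
      (∑ u, sCur p u * pot q u) = 0 := by
    intro p q hp hq
    let s : Setoid (X ⊕ Y) := ⟨α, hα⟩
    rw [← Finset.sum_fiberwise (univ : Finset (X ⊕ Y)) (fun u => (⟦u⟧ : Quotient s))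
      (fun u => sCur p u * pot q u)]
    refine Finset.sum_eq_zero fun c _ => ?_
    induction c using Quotient.inductionOn with
    | h w =>
      have hfilter : (univ.filter fun u => (⟦u⟧ : Quotient s) = ⟦w⟧) =
          univ.filter fun u => α w u := by
        ext u
        simp only [Finset.mem_filter, Finset.mem_univ, true_and]
        rw [Quotient.eq]
        exact ⟨fun h => hα.symm h, fun h => hα.symm h⟩
      rw [hfilter]
      have : ∀ u ∈ univ.filter fun u => α w u, sCur p u * pot q u = sCur p u * pot q w := by
        intro u hu
        rw [Finset.mem_filter] at hu
        rw [hq u w (hα.symm hu.2)]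
      rw [Finset.sum_congr rfl this, ← Finset.sum_mul, hp w, zero_mul]
  ext p
  simp only [Set.mem_setOf_eq]
  constructor
  · -- S ⊆ complement
    intro hp q hq
    rw [mem_corelSubspace_iff] at hp hq
    rw [omegaS_eq, key p q hp.2 hq.1, key q p hq.2 hp.1, sub_zero]
  · -- complement ⊆ S
    intro hp
    rw [mem_corelSubspace_iff]
    constructor
    · -- potential condition
      intro u v huv
      -- test vector with zero potential, signed current δ_u - δ_v
      set q : (X → F) × (X → F) × (Y → F) × (Y → F) :=
        (0, fun x => (if Sum.inl x = u then (1:F) else 0) - (if Sum.inl x = v then 1 else 0),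
         0, fun y => -((if Sum.inr y = u then (1:F) else 0) - (if Sum.inr y = v then 1 else 0)))
        with hqdef
      have hcur : sCur q = fun w => (if w = u then (1:F) else 0) - (if w = v then 1 else 0) := by
        funext w
        cases w <;> simp [sCur, hqdef]
      have hpot : pot q = 0 := by
        funext w
        cases w <;> simp [pot, hqdef]
      have hqmem : q ∈ corelSubspace (F := F) α := by
        rw [mem_corelSubspace_iff]
        refine ⟨fun a b _ => by simp [hpot], fun w => ?_⟩
        rw [hcur]
        rw [Finset.sum_sub_distrib]
        have h1 : ∀ z : X ⊕ Y, (∑ a ∈ univ.filter fun a => α w a,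
            (if a = z then (1:F) else 0)) = if α w z then 1 else 0 := by
          intro z
          rw [Finset.sum_ite_eq' (univ.filter fun a => α w a) z (fun _ => (1:F))]
          simp
        rw [h1 u, h1 v]
        have : α w u ↔ α w v := ⟨fun h => hα.trans h huv, fun h => hα.trans h (hα.symm huv)⟩
        simp [this]
      have h0 := hp q hqmem
      rw [omegaS_eq] at h0
      have hB1 : (∑ w, sCur p w * pot q w) = 0 := by
        simp [hpot]
      have hB2 : (∑ w, sCur q w * pot p w) = pot p u - pot p v := by
        rw [hcur]
        simp only [sub_mul, one_mul]
        rw [Finset.sum_sub_distrib]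
        have h1 : ∀ z : X ⊕ Y, (∑ w : X ⊕ Y, (if w = z then (1:F) else 0) * pot p w)
            = pot p z := by
          intro z
          rw [Finset.sum_eq_single z] <;> simp +contextual
        rw [h1 u, h1 v]
      rw [hB1, hB2, zero_sub, neg_eq_zero, sub_eq_zero] at h0
      exact h0
    · -- current condition
      intro w
      set q : (X → F) × (X → F) × (Y → F) × (Y → F) :=
        (fun x => if α w (Sum.inl x) then (1:F) else 0, 0,
         fun y => if α w (Sum.inr y) then (1:F) else 0, 0) with hqdef
      have hpot : pot q = fun u => if α w u then (1:F) else 0 := by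
        funext u
        cases u <;> simp [pot, hqdef]
      have hcur : sCur q = 0 := by
        funext u
        cases u <;> simp [sCur, hqdef]
      have hqmem : q ∈ corelSubspace (F := F) α := by
        rw [mem_corelSubspace_iff]
        refine ⟨fun a b hab => ?_, fun w' => by simp [hcur]⟩
        rw [hpot]
        have : α w a ↔ α w b := ⟨fun h => hα.trans h hab, fun h => hα.trans h (hα.symm hab)⟩
        simp [this]
      have h0 := hp q hqmem
      rw [omegaS_eq] at h0
      have hB2 : (∑ u, sCur q u * pot p u) = 0 := by simp [hcur]
      have hB1 : (∑ u, sCur p u * pot q u) =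
          ∑ u ∈ univ.filter fun u => α w u, sCur p u := by
        rw [hpot, Finset.sum_filter]
        refine Finset.sum_congr rfl fun u _ => ?_
        by_cases h : α w u <;> simp [h]
      rw [hB2, hB1, sub_zero] at h0
      exact h0
end
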